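/- arXiv:2512.04955 — 5 statements merged into one kernel-verified Lean document; each statement's English description precedes it below -/
import Mathlib

section
/- For any probability mass functions P_1, ..., P_n on a finite alphabet Y satisfying ∑_{y∈Y} max2{P_1(y),...,P_n(y)} ≤ 1, where max2 denotes the second largest value, there exists a coupling of P_1,...,P_n such that ∑_{y∈Y} P(∪_{i=1}^n {Y_i = y}) = ∑_{y∈Y} max{P_1(y),...,P_n(y)}. -/
open Finset

def IsPMF {α : Type*} [Fintype α] (P : α → ℝ) : Prop :=
  (∀ a, 0 ≤ P a) ∧ ∑ a, P a = 1

noncomputable def max2 {ι : Type*} [Fintype ι] (f : ι → ℝ) : ℝ :=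
  ⨆ p : {p : ι × ι // p.1 ≠ p.2}, min (f p.val.1) (f p.val.2)

/-!
Write `c y` for the second largest of the `P i y` and `s i y = min (P i y) (c y)`; the excess
`P i y - s i y` is positive only if `i` is the unique maximiser at `y`. The coupling is a mixture
of product measures over a latent `z : Option Y`: `z = some y` has weight `c y` (these weights sum
to at most `1`), and given it each `Y i` equals `y` with probability `s i y / c y` and otherwise
follows the normalised excess of `P i`; given `z = none` all `Y i` follow their normalised
excesses independently. A maximiser `j` at `y` has `s j y = c y`, so `Y j = y` whenever
`z = some y`, while a value `y` drawn from an excess distribution of `P i` forces `i` to be the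
maximiser. Hence on the support of the coupling every event `Y i = y` lies in `Y j = y`, and the
union has probability `P j y = ⨆ i, P i y`.
-/

section Max2

variable {ι : Type*} [Fintype ι] (f : ι → ℝ)

lemma min_le_max2 {i j : ι} (hij : i ≠ j) : min (f i) (f j) ≤ max2 f :=
  le_ciSup (f := fun p : {p : ι × ι // p.1 ≠ p.2} => min (f p.1.1) (f p.1.2))
    (Set.finite_range _).bddAbove ⟨(i, j), hij⟩

lemma max2_nonneg (hf : ∀ i, 0 ≤ f i) : 0 ≤ max2 f :=
  Real.iSup_nonneg fun _ => le_min (hf _) (hf _)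

lemma max2_le_of_forall_le {j : ι} (hj : ∀ i, f i ≤ f j) (hf : 0 ≤ f j) : max2 f ≤ f j :=
  Real.iSup_le (fun _ => (min_le_left _ _).trans (hj _)) hf

lemma eq_of_max2_lt {i j : ι} (hi : max2 f < f i) (hj : max2 f < f j) : i = j := by
  by_contra hij
  exact (min_le_max2 f hij).not_gt (lt_min hi hj)

end Max2

section PMF

variable {Y : Type*} [Fintype Y]

lemma isPMF_single [DecidableEq Y] (y : Y) : IsPMF (Pi.single y (1 : ℝ)) :=
  ⟨fun y' => by by_cases h : y' = y <;> simp [h], by simp⟩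

lemma IsPMF.smul_add_one_sub_smul {p q : Y → ℝ} (hp : IsPMF p) (hq : IsPMF q) {r : ℝ}
    (h0 : 0 ≤ r) (h1 : r ≤ 1) : IsPMF (r • p + (1 - r) • q) := by
  refine ⟨fun y => add_nonneg (mul_nonneg h0 (hp.1 y)) (mul_nonneg (sub_nonneg.2 h1) (hq.1 y)), ?_⟩
  simp [sum_add_distrib, ← mul_sum, hp.2, hq.2]

noncomputable def normalizeOr (R p : Y → ℝ) : Y → ℝ :=
  if ∑ y, R y = 0 then p else fun y => R y / ∑ y', R y'

variable {R : Y → ℝ}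

lemma sum_mul_normalizeOr (hR : ∀ y, 0 ≤ R y) (p : Y → ℝ) (y : Y) :
    (∑ y', R y') * normalizeOr R p y = R y := by
  by_cases h : ∑ y', R y' = 0
  · rw [h, zero_mul, (sum_eq_zero_iff_of_nonneg fun y _ => hR y).1 h y (mem_univ y)]
  · simp [normalizeOr, h, mul_div_cancel₀]

lemma isPMF_normalizeOr (hR : ∀ y, 0 ≤ R y) {p : Y → ℝ} (hp : IsPMF p) :
    IsPMF (normalizeOr R p) := by
  by_cases h : ∑ y', R y' = 0
  · simpa [normalizeOr, h] using hp
  · simp only [normalizeOr, h, if_false]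
    exact ⟨fun y => div_nonneg (hR y) (sum_nonneg fun y _ => hR y), by rw [← sum_div, div_self h]⟩

end PMF

section ProductMixture

variable {ι Y Z : Type*} [Fintype ι] [Fintype Z]

noncomputable def productMixture (π : Z → ℝ) (q : ι → Z → Y → ℝ) (f : ι → Y) : ℝ :=
  ∑ z, π z * ∏ i, q i z (f i)

variable {π : Z → ℝ} {q : ι → Z → Y → ℝ}

lemma exists_ne_zero_of_productMixture_ne_zero {f : ι → Y} (h : productMixture π q f ≠ 0) :
    ∃ z, π z ≠ 0 ∧ ∀ i, q i z (f i) ≠ 0 := by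
  obtain ⟨z, -, hz⟩ := exists_ne_zero_of_sum_ne_zero h
  exact ⟨z, left_ne_zero_of_mul hz,
    fun i => prod_ne_zero_iff.1 (right_ne_zero_of_mul hz) i (mem_univ i)⟩

variable [DecidableEq ι] [Fintype Y]

lemma sum_productMixture (hq : ∀ i z, ∑ y, q i z y = 1) :
    ∑ f, productMixture π q f = ∑ z, π z := by
  simp only [productMixture]
  rw [sum_comm]
  refine sum_congr rfl fun z _ => ?_
  rw [← mul_sum, ← Fintype.prod_sum]
  simp [hq]

lemma isPMF_productMixture (hπ : IsPMF π) (hq : ∀ i z, IsPMF (q i z)) :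
    IsPMF (productMixture π q) :=
  ⟨fun _ => sum_nonneg fun z _ => mul_nonneg (hπ.1 z) (prod_nonneg fun i _ => (hq i z).1 _),
    (sum_productMixture fun i z => (hq i z).2).trans hπ.2⟩

lemma sum_ite_productMixture [DecidableEq Y] (hq : ∀ i z, ∑ y, q i z y = 1) (i : ι) (y : Y) :
    ∑ f : ι → Y, (if f i = y then productMixture π q f else 0) = ∑ z, π z * q i z y := by
  have marginal (z : Z) :
      ∑ f : ι → Y, (if f i = y then ∏ j, q j z (f j) else 0) = q i z y := by
    calc _ = ∑ f : ι → Y, ∏ j, (if j = i then (if f j = y then q j z (f j) else 0)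
            else q j z (f j)) := by
          refine sum_congr rfl fun f _ => ?_
          split_ifs with hf
          · refine prod_congr rfl fun j _ => ?_
            split_ifs with hj <;> subst_vars <;> simp_all
          · exact (prod_eq_zero (mem_univ i) (by simp [hf])).symm
      _ = ∏ j, ∑ y', (if j = i then (if y' = y then q j z y' else 0) else q j z y') :=
          (Fintype.prod_sum fun j y' =>
            if j = i then (if y' = y then q j z y' else 0) else q j z y').symm
      _ = q i z y := by simp [hq]
  simp only [productMixture, ite_sum_zero, ← marginal, mul_sum, mul_ite, mul_zero]
  exact sum_comm

lemma sum_ite_exists_eq_of_imp [DecidableEq Y] {Q : (ι → Y) → ℝ} {j : ι} {y : Y}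
    (h : ∀ f, Q f ≠ 0 → ∀ i, f i = y → f j = y) :
    ∑ f : ι → Y, (if ∃ i, f i = y then Q f else 0) = ∑ f : ι → Y, (if f j = y then Q f else 0) := by
  refine sum_congr rfl fun f _ => ?_
  by_cases hf : Q f = 0
  · simp [hf]
  · exact if_congr ⟨fun ⟨i, hi⟩ => h f hf i hi, fun hj => ⟨j, hj⟩⟩ rfl rfl

end ProductMixture

section Construction

variable {ι Y : Type*} [Fintype ι] (P : ι → Y → ℝ)

noncomputable def sharedPart (i : ι) (y : Y) : ℝ := min (P i y) (max2 fun j => P j y)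

noncomputable def excessPart (i : ι) (y : Y) : ℝ := P i y - sharedPart P i y

lemma excessPart_nonneg (i : ι) (y : Y) : 0 ≤ excessPart P i y :=
  sub_nonneg.2 (min_le_left _ _)

variable {P}

lemma sharedPart_nonneg (hP : ∀ i y, 0 ≤ P i y) (i : ι) (y : Y) : 0 ≤ sharedPart P i y :=
  le_min (hP i y) (max2_nonneg _ fun j => hP j y)

lemma sharedPart_of_forall_le (hP : ∀ i y, 0 ≤ P i y) {j : ι} {y : Y} (hj : ∀ k, P k y ≤ P j y) :
    sharedPart P j y = max2 fun k => P k y :=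
  min_eq_right (max2_le_of_forall_le _ hj (hP j y))

lemma max2_lt_of_excessPart_ne_zero {i : ι} {y : Y} (h : excessPart P i y ≠ 0) :
    (max2 fun j => P j y) < P i y := by
  by_contra! hle
  exact h (by simp [excessPart, sharedPart, min_eq_left hle])

lemma max2_mul_div_sharedPart (hP : ∀ i y, 0 ≤ P i y) (i : ι) (y : Y) :
    (max2 fun j => P j y) * (sharedPart P i y / max2 fun j => P j y) = sharedPart P i y :=
  mul_div_cancel_of_imp' fun h => le_antisymm (h ▸ min_le_right _ _) (sharedPart_nonneg hP i y)

variable [Fintype Y] (P)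

noncomputable def slack : ℝ := 1 - ∑ y, max2 fun j => P j y

noncomputable def latentWeight : Option Y → ℝ
  | none => slack P
  | some y => max2 fun j => P j y

-- The fallback `P i` never matters: by `sum_excessPart_eq_zero_iff`, the excess has mass `0` only
-- if every latent value whose channel uses `excessDist P i` has weight `0`.
noncomputable def excessDist (i : ι) : Y → ℝ := normalizeOr (excessPart P i) (P i)

variable {P}

lemma slack_nonneg (h2 : ∑ y, max2 (fun j => P j y) ≤ 1) : 0 ≤ slack P :=
  sub_nonneg.2 h2

lemma sum_excessPart (hP : ∀ i, ∑ y, P i y = 1) (i : ι) :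
    ∑ y, excessPart P i y = slack P + ∑ y, ((max2 fun j => P j y) - sharedPart P i y) := by
  simp only [excessPart, slack, sum_sub_distrib, hP i]
  ring

lemma sum_excessPart_eq_zero_iff (hP : ∀ i, ∑ y, P i y = 1) (h2 : ∑ y, max2 (fun j => P j y) ≤ 1)
    (i : ι) :
    ∑ y, excessPart P i y = 0 ↔ slack P = 0 ∧ ∀ y, sharedPart P i y = max2 fun j => P j y := by
  have hgap (y : Y) : 0 ≤ (max2 fun j => P j y) - sharedPart P i y :=
    sub_nonneg.2 (min_le_right _ _)
  rw [sum_excessPart hP, add_eq_zero_iff_of_nonneg (slack_nonneg h2) (sum_nonneg fun y _ => hgap y),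
    sum_eq_zero_iff_of_nonneg fun y _ => hgap y]
  simp only [mem_univ, forall_const]
  exact and_congr_right' (forall_congr' fun y => by rw [sub_eq_zero, eq_comm])

lemma isPMF_latentWeight (hP : ∀ i, IsPMF (P i)) (h2 : ∑ y, max2 (fun j => P j y) ≤ 1) :
    IsPMF (latentWeight P) := by
  refine ⟨fun z => ?_, ?_⟩
  · cases z with
    | none => exact slack_nonneg h2
    | some y => exact max2_nonneg (P · y) fun j => (hP j).1 y
  · simp [Fintype.sum_option, latentWeight, slack]

lemma eq_of_excessDist_ne_zero {i j : ι} {y : Y} (hj : ∀ k, P k y ≤ P j y)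
    (hmass : ∑ y', excessPart P i y' ≠ 0) (h : excessDist P i y ≠ 0) : i = j := by
  have hi : excessPart P i y ≠ 0 := by
    rw [← sum_mul_normalizeOr (excessPart_nonneg P i) (P i) y]
    exact mul_ne_zero hmass h
  have hlt := max2_lt_of_excessPart_ne_zero hi
  exact eq_of_max2_lt _ hlt (hlt.trans_le (hj i))

variable [DecidableEq Y] (P)

-- If `max2 fun j => P j y = 0` the ratio is the junk value `0`, but then `some y` has weight `0`.
noncomputable def channel (i : ι) : Option Y → Y → ℝ
  | none => excessDist P i
  | some y => (sharedPart P i y / max2 fun j => P j y) • Pi.single y 1 +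
      (1 - sharedPart P i y / max2 fun j => P j y) • excessDist P i

noncomputable def coupling [DecidableEq ι] : (ι → Y) → ℝ :=
  productMixture (latentWeight P) (channel P)

variable {P}

lemma isPMF_channel (hP : ∀ i, IsPMF (P i)) (i : ι) (z : Option Y) : IsPMF (channel P i z) := by
  have hμ : IsPMF (excessDist P i) := isPMF_normalizeOr (excessPart_nonneg P i) (hP i)
  cases z with
  | none => exact hμ
  | some y =>
    exact (isPMF_single y).smul_add_one_sub_smul hμ
      (div_nonneg (sharedPart_nonneg (fun i => (hP i).1) i y) (max2_nonneg _ fun j => (hP j).1 y))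
      (div_le_one_of_le₀ (min_le_right _ _) (max2_nonneg _ fun j => (hP j).1 y))

lemma sum_latentWeight_mul_channel (hP : ∀ i, IsPMF (P i)) (i : ι) (y : Y) :
    ∑ z, latentWeight P z * channel P i z y = P i y := by
  have hterm (y' : Y) : (max2 fun j => P j y') * channel P i (some y') y =
      sharedPart P i y' * (Pi.single y' 1 : Y → ℝ) y +
        ((max2 fun j => P j y') - sharedPart P i y') * excessDist P i y := by
    simp only [channel, Pi.add_apply, Pi.smul_apply, smul_eq_mul]
    rw [mul_add, ← mul_assoc, ← mul_assoc, mul_sub, mul_one,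
      max2_mul_div_sharedPart (fun i => (hP i).1)]
  have hexcess := sum_mul_normalizeOr (excessPart_nonneg P i) (P i) y
  rw [sum_excessPart fun i => (hP i).2] at hexcess
  simp only [Fintype.sum_option, latentWeight, hterm, sum_add_distrib, ← sum_mul]
  simp only [channel, excessDist, Pi.single_apply, mul_ite, mul_one, mul_zero, sum_ite_eq,
    mem_univ, if_true, excessPart] at hexcess ⊢
  linear_combination hexcess

variable [DecidableEq ι]

lemma isPMF_coupling (hP : ∀ i, IsPMF (P i)) (h2 : ∑ y, max2 (fun j => P j y) ≤ 1) :
    IsPMF (coupling P) :=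
  isPMF_productMixture (isPMF_latentWeight hP h2) (isPMF_channel hP)

lemma sum_ite_coupling (hP : ∀ i, IsPMF (P i)) (i : ι) (y : Y) :
    ∑ f : ι → Y, (if f i = y then coupling P f else 0) = P i y := by
  rw [coupling, sum_ite_productMixture (fun i z => (isPMF_channel hP i z).2),
    sum_latentWeight_mul_channel hP]

lemma apply_eq_of_coupling_ne_zero (hP : ∀ i, IsPMF (P i)) (h2 : ∑ y, max2 (fun j => P j y) ≤ 1)
    {f : ι → Y} (hf : coupling P f ≠ 0) {i j : ι} {y : Y} (hj : ∀ k, P k y ≤ P j y)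
    (hi : f i = y) : f j = y := by
  have hexcess (hmass : ∑ y', excessPart P i y' ≠ 0) (h : excessDist P i y ≠ 0) : f j = y :=
    eq_of_excessDist_ne_zero hj hmass h ▸ hi
  have hmass_iff := sum_excessPart_eq_zero_iff (fun i => (hP i).2) h2 i
  obtain ⟨z, hz, hq⟩ := exists_ne_zero_of_productMixture_ne_zero hf
  cases z with
  | none => exact hexcess (fun h => hz (hmass_iff.1 h).1) (hi ▸ hq i)
  | some y' =>
    have hc : (max2 fun k => P k y') ≠ 0 := hz
    by_cases hy : y' = y
    · subst hy
      simpa [channel, sharedPart_of_forall_le (fun i => (hP i).1) hj, div_self hc,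
        Pi.single_apply] using hq j
    · have hqi := hq i
      simp only [channel, hi, Pi.add_apply, Pi.smul_apply, smul_eq_mul, Pi.single_apply,
        Ne.symm hy, if_false, mul_zero, zero_add] at hqi
      obtain ⟨hr, hμ⟩ := mul_ne_zero_iff.1 hqi
      have hs : sharedPart P i y' ≠ max2 fun k => P k y' := fun h =>
        hr (by rw [h, div_self hc, sub_self])
      exact hexcess (fun h => hs ((hmass_iff.1 h).2 y')) hμ

end Construction

theorem stmt2 {ι Y : Type*} [Fintype ι] [Fintype Y] [DecidableEq ι] [Nonempty ι] [DecidableEq Y]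
    (P : ι → Y → ℝ) (hP : ∀ i, IsPMF (P i))
    (h2 : ∑ y, max2 (fun i => P i y) ≤ 1) :
    ∃ Q : (ι → Y) → ℝ, IsPMF Q ∧
      (∀ i y, ∑ f : ι → Y, (if f i = y then Q f else 0) = P i y) ∧
      ∑ y, ∑ f : ι → Y, (if ∃ i, f i = y then Q f else 0) = ∑ y, ⨆ i, P i y := by
  refine ⟨coupling P, isPMF_coupling hP h2, sum_ite_coupling hP, sum_congr rfl fun y _ => ?_⟩
  obtain ⟨j, hj⟩ := Finite.exists_max fun i => P i y
  rw [sum_ite_exists_eq_of_imp fun f hf i => apply_eq_of_coupling_ne_zero hP h2 hf hj,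
    sum_ite_coupling hP]
  exact (le_antisymm (ciSup_le hj) (le_ciSup (Finite.bddAbove_range (P · y)) j)).symm
end

section
/- For n = 3 probability mass functions P_1, P_2, P_3 on a finite alphabet Y, a coupling achieving ∑_{y∈Y} P(∪_{i=1}^3 {Y_i = y}) = ∑_{y∈Y} max{P_1(y),P_2(y),P_3(y)} exists if and only if ∑_{y∈Y} max2{P_1(y),P_2(y),P_3(y)} ≤ 1, where max2 denotes the second largest value among the three. -/
open Finset

set_option linter.unusedSectionVars false

section SupLemmas

lemma fin3_le2' (j : Fin 3) : j ≤ 2 := by omega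

lemma sup3_eq (g : Fin 3 → ℝ) (σ : Equiv.Perm (Fin 3)) (hm : Monotone (g ∘ σ)) :
    ⨆ i, g i = g (σ 2) := by
  refine le_antisymm (ciSup_le fun i => ?_) (le_ciSup (Finite.bddAbove_range g) (σ 2))
  have : g i = (g ∘ σ) (σ.symm i) := by simp
  rw [this]
  exact hm (fin3_le2' _)

lemma max2_eq (g : Fin 3 → ℝ) (σ : Equiv.Perm (Fin 3)) (hm : Monotone (g ∘ σ)) :
    max2 g = g (σ 1) := by
  have hne : (σ 1 : Fin 3) ≠ σ 2 := by simp [σ.injective.eq_iff]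
  haveI : Nonempty {p : Fin 3 × Fin 3 // p.1 ≠ p.2} := ⟨⟨(σ 1, σ 2), hne⟩⟩
  refine le_antisymm (ciSup_le fun p => ?_) ?_
  · have h1 : σ.symm p.val.1 ≠ σ.symm p.val.2 := by
      simp [σ.symm.injective.eq_iff]; exact p.2
    have key : σ.symm p.val.1 ≤ 1 ∨ σ.symm p.val.2 ≤ 1 := by
      rcases p with ⟨⟨x, y⟩, hxy⟩
      revert h1; generalize σ.symm x = u; generalize σ.symm y = v
      intro h; revert h; revert u v; decide
    rcases key with h | h
    · refine le_trans (min_le_left _ _) ?_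
      have : g p.val.1 = (g ∘ σ) (σ.symm p.val.1) := by simp
      rw [this]; exact hm h
    · refine le_trans (min_le_right _ _) ?_
      have : g p.val.2 = (g ∘ σ) (σ.symm p.val.2) := by simp
      rw [this]; exact hm h
  · have := le_ciSup (f := fun p : {p : Fin 3 × Fin 3 // p.1 ≠ p.2} =>
      min (g p.val.1) (g p.val.2))
      (Finite.bddAbove_range _) ⟨(σ 1, σ 2), hne⟩
    refine le_trans ?_ this
    have h12 : (g ∘ σ) 1 ≤ (g ∘ σ) 2 := hm (by decide)
    simp only [min_def]
    split <;> simp_all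

end SupLemmas

section Forward

lemma pigeon3 : ∀ i i' j j' : Fin 3, i ≠ i' → j ≠ j' →
    (i = j ∨ i = j' ∨ i' = j ∨ i' = j') := by decide

lemma forward_dir {Y : Type*} [Fintype Y] [DecidableEq Y]
    (P : Fin 3 → Y → ℝ)
    (σ : Y → Equiv.Perm (Fin 3))
    (Q : (Fin 3 → Y) → ℝ) (hQ : IsPMF Q)
    (hmarg : ∀ i y, ∑ f : Fin 3 → Y, (if f i = y then Q f else 0) = P i y)
    (hu : ∑ y, ∑ f : Fin 3 → Y, (if ∃ i, f i = y then Q f else 0) = ∑ y, P (σ y 2) y) :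
    ∑ y, P (σ y 1) y ≤ 1 := by
  obtain ⟨hQ0, hQ1⟩ := hQ
  have hUge : ∀ y, P (σ y 2) y ≤ ∑ f : Fin 3 → Y, (if ∃ i, f i = y then Q f else 0) := by
    intro y
    rw [← hmarg (σ y 2) y]
    refine Finset.sum_le_sum fun f _ => ?_
    by_cases h : f (σ y 2) = y
    · rw [if_pos h, if_pos (show ∃ i, f i = y from ⟨_, h⟩)]
    · simp only [if_neg h]
      split <;> [exact hQ0 f; exact le_refl 0]
  have hUeq : ∀ y, ∑ f : Fin 3 → Y, (if ∃ i, f i = y then Q f else 0) = P (σ y 2) y := by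
    intro y
    have := (Finset.sum_eq_sum_iff_of_le (fun y _ => hUge y)).mp hu.symm y (mem_univ y)
    exact this.symm
  have hrem : ∀ y, ∑ f : Fin 3 → Y,
      (if f (σ y 1) = y ∧ ¬ f (σ y 2) = y then Q f else 0) = 0 := by
    intro y
    have hle : ∑ f : Fin 3 → Y, ((if f (σ y 2) = y then Q f else 0)
        + (if f (σ y 1) = y ∧ ¬ f (σ y 2) = y then Q f else 0))
        ≤ ∑ f : Fin 3 → Y, (if ∃ i, f i = y then Q f else 0) := by
      refine Finset.sum_le_sum fun f _ => ?_
      by_cases h2 : f (σ y 2) = y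
      · simp only [if_pos h2, h2, not_true, and_false, if_neg (by simp : ¬(f (σ y 1) = y ∧ False))]
        rw [if_pos (show ∃ i, f i = y from ⟨_, h2⟩)]
        simp
      · simp only [if_neg h2]
        by_cases h1 : f (σ y 1) = y
        · rw [zero_add, if_pos (show f (σ y 1) = y ∧ ¬ f (σ y 2) = y from ⟨h1, h2⟩),
              if_pos (show ∃ i, f i = y from ⟨_, h1⟩)]
        · simp only [h1, false_and, if_neg (not_false), zero_add]
          split <;> [exact hQ0 f; exact le_refl 0]
    rw [Finset.sum_add_distrib, hmarg, hUeq] at hle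
    have hge : (0:ℝ) ≤ ∑ f : Fin 3 → Y,
        (if f (σ y 1) = y ∧ ¬ f (σ y 2) = y then Q f else 0) := by
      refine Finset.sum_nonneg fun f _ => ?_
      split <;> [exact hQ0 f; exact le_refl 0]
    linarith
  have hB : ∀ y, P (σ y 1) y ≤ ∑ f : Fin 3 → Y,
      (if ∃ i i', i ≠ i' ∧ f i = y ∧ f i' = y then Q f else 0) := by
    intro y
    rw [← hmarg (σ y 1) y]
    have := hrem y
    calc ∑ f : Fin 3 → Y, (if f (σ y 1) = y then Q f else 0)
        ≤ ∑ f : Fin 3 → Y, ((if ∃ i i', i ≠ i' ∧ f i = y ∧ f i' = y then Q f else 0)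
            + (if f (σ y 1) = y ∧ ¬ f (σ y 2) = y then Q f else 0)) := by
          refine Finset.sum_le_sum fun f _ => ?_
          by_cases h1 : f (σ y 1) = y
          · by_cases h2 : f (σ y 2) = y
            · have hne : σ y 1 ≠ σ y 2 := by
                simp [ (σ y).injective.eq_iff]
              rw [if_pos h1, if_pos (show ∃ i i', i ≠ i' ∧ f i = y ∧ f i' = y from
                ⟨σ y 1, σ y 2, hne, h1, h2⟩)]
              have : (0:ℝ) ≤ if f (σ y 1) = y ∧ ¬f (σ y 2) = y then Q f else 0 := by
                split <;> [exact hQ0 f; exact le_refl 0]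
              linarith
            · rw [if_pos h1, if_pos (show f (σ y 1) = y ∧ ¬ f (σ y 2) = y from ⟨h1, h2⟩)]
              have : (0:ℝ) ≤ if ∃ i i', i ≠ i' ∧ f i = y ∧ f i' = y then Q f else 0 := by
                split <;> [exact hQ0 f; exact le_refl 0]
              linarith
          · rw [if_neg h1]
            have h3 : (0:ℝ) ≤ if ∃ i i', i ≠ i' ∧ f i = y ∧ f i' = y then Q f else 0 := by
              split <;> [exact hQ0 f; exact le_refl 0]
            have h4 : (0:ℝ) ≤ if f (σ y 1) = y ∧ ¬f (σ y 2) = y then Q f else 0 := by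
              split <;> [exact hQ0 f; exact le_refl 0]
            linarith
      _ = ∑ f : Fin 3 → Y, (if ∃ i i', i ≠ i' ∧ f i = y ∧ f i' = y then Q f else 0) := by
          rw [Finset.sum_add_distrib, hrem, add_zero]
  calc ∑ y, P (σ y 1) y
      ≤ ∑ y, ∑ f : Fin 3 → Y, (if ∃ i i', i ≠ i' ∧ f i = y ∧ f i' = y then Q f else 0) :=
        Finset.sum_le_sum fun y _ => hB y
    _ = ∑ f : Fin 3 → Y, ∑ y, (if ∃ i i', i ≠ i' ∧ f i = y ∧ f i' = y then Q f else 0) :=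
        Finset.sum_comm
    _ ≤ ∑ f : Fin 3 → Y, Q f := by
        refine Finset.sum_le_sum fun f _ => ?_
        have hcard : (univ.filter (fun y => ∃ i i', i ≠ i' ∧ f i = y ∧ f i' = y)).card ≤ 1 := by
          refine Finset.card_le_one.mpr fun y hy y' hy' => ?_
          simp only [mem_filter, true_and, mem_univ] at hy hy'
          obtain ⟨i, i', hii, h1, h2⟩ := hy
          obtain ⟨j, j', hjj, h3, h4⟩ := hy'
          rcases pigeon3 i i' j j' hii hjj with h|h|h|h
          · rw [← h1, h, h3]
          · rw [← h1, h, h4]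
          · rw [← h2, h, h3]
          · rw [← h2, h, h4]
        calc (∑ y, if ∃ i i', i ≠ i' ∧ f i = y ∧ f i' = y then Q f else 0)
            = ∑ y ∈ univ.filter (fun y => ∃ i i', i ≠ i' ∧ f i = y ∧ f i' = y), Q f := by
              rw [Finset.sum_filter]
          _ = (univ.filter (fun y => ∃ i i', i ≠ i' ∧ f i = y ∧ f i' = y)).card • Q f :=
              Finset.sum_const _
          _ ≤ 1 • Q f := by
              exact smul_le_smul_of_nonneg_right (by exact_mod_cast hcard) (hQ0 f)
          _ = Q f := one_smul _ _
    _ = 1 := hQ1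

end Forward

section Construct
variable {Y : Type*} [Fintype Y] [DecidableEq Y]

noncomputable def asg (P : Fin 3 → Y → ℝ) (σ : Y → Equiv.Perm (Fin 3)) (i : Fin 3) (y : Y) :
    ℝ := if i = σ y 0 then P (σ y 0) y else P (σ y 1) y

noncomputable def dd (P : Fin 3 → Y → ℝ) (σ : Y → Equiv.Perm (Fin 3)) (i : Fin 3) (y : Y) :
    ℝ := P i y - asg P σ i y

noncomputable def DD (P : Fin 3 → Y → ℝ) (σ : Y → Equiv.Perm (Fin 3)) (i : Fin 3) : ℝ :=
  ∑ y, dd P σ i y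

noncomputable def rr (P : Fin 3 → Y → ℝ) (σ : Y → Equiv.Perm (Fin 3)) (i : Fin 3) (z : Y) :
    ℝ := if DD P σ i = 0 then 0 else dd P σ i z / DD P σ i

def dbl (σ : Y → Equiv.Perm (Fin 3)) (y z : Y) : Fin 3 → Y :=
  fun i => if i = σ y 0 then z else y

variable (P : Fin 3 → Y → ℝ) (σ : Y → Equiv.Perm (Fin 3))

noncomputable def QQ (f : Fin 3 → Y) : ℝ :=
  (∑ y, if f = (fun _ => y) then P (σ y 0) y else 0)
  + (∑ y, ∑ z, if f = dbl σ y z then (P (σ y 1) y - P (σ y 0) y) * rr P σ (σ y 0) z else 0)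
  + (1 - ∑ y, P (σ y 1) y) * ∏ i, rr P σ i (f i)

lemma signe (y : Y) : σ y 0 ≠ σ y 1 ∧ σ y 0 ≠ σ y 2 ∧ σ y 1 ≠ σ y 2 :=
  ⟨(σ y).injective.ne (by decide), (σ y).injective.ne (by decide),
   (σ y).injective.ne (by decide)⟩

variable (hP : ∀ i, IsPMF (P i)) (hm : ∀ y, Monotone ((fun i => P i y) ∘ σ y))
variable (hS : ∑ y, P (σ y 1) y ≤ 1)

include hm in
lemma hcb (y : Y) : P (σ y 0) y ≤ P (σ y 1) y := by
  have := hm y (by decide : (0:Fin 3) ≤ 1)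
  simpa using this

include hm in
lemma hba (y : Y) : P (σ y 1) y ≤ P (σ y 2) y := by
  have := hm y (by decide : (1:Fin 3) ≤ 2)
  simpa using this

include hm in
lemma hd_nonneg (i : Fin 3) (y : Y) : 0 ≤ dd P σ i y := by
  have hi : i = σ y ((σ y).symm i) := by simp
  have h3 : (σ y).symm i = 0 ∨ (σ y).symm i = 1 ∨ (σ y).symm i = 2 := by omega
  unfold dd asg
  rcases h3 with h | h | h <;> rw [hi, h]
  · simp
  · rw [if_neg (Ne.symm (signe σ y).1)]; simp
  · rw [if_neg (Ne.symm (signe σ y).2.1)]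
    have := hba P σ hm y; linarith

lemma hd_zero (i : Fin 3) (y : Y) (h : i ≠ σ y 2) : dd P σ i y = 0 := by
  have hi : i = σ y ((σ y).symm i) := by simp
  have h3 : (σ y).symm i = 0 ∨ (σ y).symm i = 1 := by
    rcases (by omega : (σ y).symm i = 0 ∨ (σ y).symm i = 1 ∨ (σ y).symm i = 2) with
      h'|h'|h'
    · exact Or.inl h'
    · exact Or.inr h'
    · exact absurd (by rw [hi, h']) h
  unfold dd asg
  rcases h3 with h' | h' <;> rw [hi, h']
  · simp
  · rw [if_neg (Ne.symm (signe σ y).1)]; simp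

include hP in
lemma hD_eq (i : Fin 3) : DD P σ i =
    (1 - ∑ y, P (σ y 1) y) + ∑ y, (if i = σ y 0 then P (σ y 1) y - P (σ y 0) y else 0) := by
  unfold DD dd
  rw [Finset.sum_sub_distrib, (hP i).2]
  have h : ∀ y : Y, asg P σ i y
      = P (σ y 1) y - (if i = σ y 0 then P (σ y 1) y - P (σ y 0) y else 0) := by
    intro y; unfold asg; split <;> ring
  rw [Finset.sum_congr rfl fun y _ => h y, Finset.sum_sub_distrib]
  ring

include hP hm hS in
lemma hS_le_D (i : Fin 3) : 1 - ∑ y, P (σ y 1) y ≤ DD P σ i := by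
  rw [hD_eq P σ hP i]
  have : (0:ℝ) ≤ ∑ y, (if i = σ y 0 then P (σ y 1) y - P (σ y 0) y else 0) := by
    refine Finset.sum_nonneg fun y _ => ?_
    split
    · have := hcb P σ hm y; linarith
    · exact le_refl 0
  linarith

include hP hm hS in
lemma hbc_le_D (y : Y) :
    P (σ y 1) y - P (σ y 0) y ≤ DD P σ (σ y 0) := by
  rw [hD_eq P σ hP (σ y 0)]
  have h1 : (if σ y 0 = σ y 0 then P (σ y 1) y - P (σ y 0) y else 0)
      ≤ ∑ y', (if σ y 0 = σ y' 0 then P (σ y' 1) y' - P (σ y' 0) y' else 0) := by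
    refine Finset.single_le_sum
      (f := fun y' => if σ y 0 = σ y' 0 then P (σ y' 1) y' - P (σ y' 0) y' else 0)
      (fun y' _ => ?_) (mem_univ y)
    split
    · have := hcb P σ hm y'; linarith
    · exact le_refl 0
  rw [if_pos rfl] at h1
  linarith

include hm in
lemma hdD (i : Fin 3) (h : DD P σ i = 0) (z : Y) : dd P σ i z = 0 := by
  have := (Finset.sum_eq_zero_iff_of_nonneg
    (fun y (_ : y ∈ univ) => hd_nonneg P σ hm i y)).mp h
  exact this z (mem_univ z)

include hm in
lemma hr_nonneg (i : Fin 3) (z : Y) : 0 ≤ rr P σ i z := by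
  unfold rr; split
  · exact le_refl 0
  · rename_i h
    have h1 := hd_nonneg P σ hm i z
    have h2 : 0 ≤ DD P σ i := Finset.sum_nonneg fun y _ => hd_nonneg P σ hm i y
    positivity

lemma hr_zero (i : Fin 3) (z : Y) (h : dd P σ i z = 0) : rr P σ i z = 0 := by
  unfold rr; split
  · rfl
  · rw [h, zero_div]

include hm in
lemma hDr (i : Fin 3) (z : Y) : DD P σ i * rr P σ i z = dd P σ i z := by
  unfold rr; split
  · rename_i h; rw [h, zero_mul, hdD P σ hm i h z]
  · rename_i h; field_simp

lemma hsum_r (i : Fin 3) (h : DD P σ i ≠ 0) : ∑ z, rr P σ i z = 1 := by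
  unfold rr
  rw [Finset.sum_congr rfl fun z _ => if_neg h, ← Finset.sum_div]
  exact div_self h

include hm in
lemma hwr (i : Fin 3) (w : ℝ) (h0 : 0 ≤ w) (h1 : w ≤ DD P σ i) :
    w * ∑ z, rr P σ i z = w := by
  rcases eq_or_ne (DD P σ i) 0 with h | h
  · have : w = 0 := le_antisymm (h ▸ h1) h0
    rw [this, zero_mul]
  · rw [hsum_r P σ i h, mul_one]

-- generic summation helpers
lemma H1 (p : (Fin 3 → Y) → Prop) [DecidablePred p] (g₀ : Fin 3 → Y) (w : ℝ) :
    ∑ f : Fin 3 → Y, (if p f then (if f = g₀ then w else 0) else 0)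
      = if p g₀ then w else 0 := by
  have h : ∀ f : Fin 3 → Y, (if p f then (if f = g₀ then w else 0) else 0)
      = (if f = g₀ then (if p g₀ then w else 0) else 0) := by
    intro f
    by_cases hf : f = g₀
    · subst hf; simp
    · simp [hf]
  rw [Finset.sum_congr rfl fun f _ => h f]
  simp [Finset.sum_ite_eq']

lemma H1' (g₀ : Fin 3 → Y) (w : ℝ) :
    ∑ f : Fin 3 → Y, (if f = g₀ then w else 0) = w := by
  simp [Finset.sum_ite_eq']

lemma H2 (g : Fin 3 → Y → ℝ) (i : Fin 3) (x : Y) :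
    ∑ f : Fin 3 → Y, (if f i = x then ∏ i', g i' (f i') else 0)
      = ∏ i', (if i' = i then (∑ z, if z = x then g i z else 0) else ∑ z, g i' z) := by
  have h : ∀ f : Fin 3 → Y, (if f i = x then ∏ i', g i' (f i') else 0)
      = ∏ i', (if i' = i then (if f i' = x then g i (f i') else 0) else g i' (f i')) := by
    intro f
    by_cases hf : f i = x
    · rw [if_pos hf]
      refine Finset.prod_congr rfl fun i' _ => ?_
      by_cases hi : i' = i
      · subst hi; rw [if_pos rfl, if_pos hf]
      · rw [if_neg hi]
    · rw [if_neg hf]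
      exact (Finset.prod_eq_zero (mem_univ i) (by simp [hf])).symm
  rw [Finset.sum_congr rfl fun f _ => h f,
    ← Fintype.prod_sum (fun i' z => if i' = i then (if z = x then g i z else 0) else g i' z)]
  refine Finset.prod_congr rfl fun i' _ => ?_
  by_cases hi : i' = i <;> simp [hi]

lemma ite_sum {c : Prop} [Decidable c] (w : Y → ℝ) :
    (if c then ∑ y, w y else 0) = ∑ y, if c then w y else 0 := by
  split <;> simp

include hP hm hS in
lemma hT3 (i : Fin 3) (x : Y) :
    ∑ f : Fin 3 → Y, (if f i = x then
        (1 - ∑ y, P (σ y 1) y) * ∏ i', rr P σ i' (f i') else 0)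
      = (1 - ∑ y, P (σ y 1) y) * rr P σ i x := by
  have hmove : ∀ f : Fin 3 → Y, (if f i = x then
      (1 - ∑ y, P (σ y 1) y) * ∏ i', rr P σ i' (f i') else 0)
      = (1 - ∑ y, P (σ y 1) y) * (if f i = x then ∏ i', rr P σ i' (f i') else 0) := by
    intro f; split <;> ring
  rw [Finset.sum_congr rfl fun f _ => hmove f, ← Finset.mul_sum, H2]
  have hix : (∑ z, if z = x then rr P σ i z else 0) = rr P σ i x := by
    simp [Finset.sum_ite_eq']
  rw [hix]
  rcases eq_or_ne (1 - ∑ y, P (σ y 1) y) 0 with h | h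
  · rw [h, zero_mul, zero_mul]
  · have hD : ∀ i', DD P σ i' ≠ 0 := by
      intro i' h0
      have h1 := hS_le_D P σ hP hm hS i'
      rw [h0] at h1
      exact h (by linarith)
    have : ∀ i' : Fin 3, (if i' = i then rr P σ i x else ∑ z, rr P σ i' z)
        = (if i' = i then rr P σ i x else 1) := by
      intro i'
      by_cases hi : i' = i
      · simp [hi]
      · rw [if_neg hi, if_neg hi, hsum_r P σ i' (hD i')]
    rw [Finset.prod_congr rfl fun i' _ => this i', Finset.prod_ite_eq' univ i
      (fun _ => rr P σ i x), if_pos (mem_univ i)]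

include hP hm hS in
lemma Q_marg (i : Fin 3) (x : Y) :
    ∑ f : Fin 3 → Y, (if f i = x then QQ P σ f else 0) = P i x := by
  have hsplit : ∀ f : Fin 3 → Y, (if f i = x then QQ P σ f else 0)
      = (if f i = x then (∑ y, if f = (fun _ => y) then P (σ y 0) y else 0) else 0)
      + (if f i = x then (∑ y, ∑ z, if f = dbl σ y z then
            (P (σ y 1) y - P (σ y 0) y) * rr P σ (σ y 0) z else 0) else 0)
      + (if f i = x then (1 - ∑ y, P (σ y 1) y) * ∏ i', rr P σ i' (f i') else 0) := by
    intro f; unfold QQ; split <;> ring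
  rw [Finset.sum_congr rfl fun f _ => hsplit f, Finset.sum_add_distrib,
    Finset.sum_add_distrib]
  -- piece 1
  have hp1 : ∑ f : Fin 3 → Y, (if f i = x then
      (∑ y, if f = (fun _ => y) then P (σ y 0) y else 0) else 0) = P (σ x 0) x := by
    rw [Finset.sum_congr rfl fun f _ => ite_sum _, Finset.sum_comm]
    rw [Finset.sum_congr rfl fun y _ => H1 (fun f => f i = x) (fun _ => y) (P (σ y 0) y)]
    simp [Finset.sum_ite_eq']
  -- piece 2
  have hp2 : ∑ f : Fin 3 → Y, (if f i = x then
      (∑ y, ∑ z, if f = dbl σ y z then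
        (P (σ y 1) y - P (σ y 0) y) * rr P σ (σ y 0) z else 0) else 0)
      = (∑ y, if i = σ y 0 then P (σ y 1) y - P (σ y 0) y else 0) * rr P σ i x
        + (if i = σ x 0 then 0 else P (σ x 1) x - P (σ x 0) x) := by
    rw [Finset.sum_congr rfl fun f _ => ite_sum _, Finset.sum_comm]
    have inner : ∀ y : Y, ∑ f : Fin 3 → Y, (if f i = x then
        (∑ z, if f = dbl σ y z then (P (σ y 1) y - P (σ y 0) y) * rr P σ (σ y 0) z else 0)
          else 0)
        = (if i = σ y 0 then P (σ y 1) y - P (σ y 0) y else 0) * rr P σ i x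
          + (if y = x then (if i = σ y 0 then 0
              else (P (σ y 1) y - P (σ y 0) y) * ∑ z, rr P σ (σ y 0) z) else 0) := by
      intro y
      rw [Finset.sum_congr rfl fun f _ => ite_sum _, Finset.sum_comm]
      rw [Finset.sum_congr rfl fun z _ => H1 (fun f => f i = x) (dbl σ y z) _]
      by_cases hi : i = σ y 0
      · have hv : ∀ z : Y, dbl σ y z i = z := fun z => by
          unfold dbl; rw [if_pos hi]
        rw [Finset.sum_congr rfl fun z _ => by rw [hv z]]
        rw [if_pos hi, Finset.sum_ite_eq' univ x
          (fun z => (P (σ y 1) y - P (σ y 0) y) * rr P σ (σ y 0) z), if_pos (mem_univ x)]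
        rw [← hi]
        simp
      · have hv : ∀ z : Y, dbl σ y z i = y := fun z => by
          unfold dbl; rw [if_neg hi]
        rw [Finset.sum_congr rfl fun z _ => by rw [hv z]]
        rw [if_neg hi]
        by_cases hyx : y = x
        · subst hyx
          simp [hi, Finset.mul_sum]
        · simp [hyx]
    rw [Finset.sum_congr rfl fun y _ => inner y, Finset.sum_add_distrib, ← Finset.sum_mul]
    congr 1
    rw [Finset.sum_ite_eq' univ x, if_pos (mem_univ x)]
    by_cases hix : i = σ x 0
    · rw [if_pos hix, if_pos hix]
    · rw [if_neg hix, if_neg hix]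
      exact hwr P σ hm (σ x 0) _ (by have := hcb P σ hm x; linarith)
        (hbc_le_D P σ hP hm hS x)
  rw [hp1, hp2, hT3 P σ hP hm hS i x]
  have hDi := hD_eq P σ hP i
  have hDrix := hDr P σ hm i x
  have hasg : dd P σ i x = P i x - (if i = σ x 0 then P (σ x 0) x else P (σ x 1) x) := rfl
  have hkey : (∑ y : Y, if i = σ y 0 then P (σ y 1) y - P (σ y 0) y else 0) * rr P σ i x
      + (1 - ∑ y, P (σ y 1) y) * rr P σ i x = dd P σ i x := by
    rw [← hDrix, hDi]; ring
  by_cases hix : i = σ x 0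
  · rw [if_pos hix] at hasg ⊢
    linarith [hkey, hasg]
  · rw [if_neg hix] at hasg ⊢
    linarith [hkey, hasg]

include hP hm hS in
lemma Q_union (x : Y) :
    ∑ f : Fin 3 → Y, (if ∃ i, f i = x then QQ P σ f else 0) = P (σ x 2) x := by
  have hsplit : ∀ f : Fin 3 → Y, (if ∃ i, f i = x then QQ P σ f else 0)
      = (if ∃ i, f i = x then (∑ y, if f = (fun _ => y) then P (σ y 0) y else 0) else 0)
      + (if ∃ i, f i = x then (∑ y, ∑ z, if f = dbl σ y z then
            (P (σ y 1) y - P (σ y 0) y) * rr P σ (σ y 0) z else 0) else 0)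
      + (if ∃ i, f i = x then (1 - ∑ y, P (σ y 1) y) * ∏ i', rr P σ i' (f i') else 0) := by
    intro f; unfold QQ; split <;> ring
  rw [Finset.sum_congr rfl fun f _ => hsplit f, Finset.sum_add_distrib,
    Finset.sum_add_distrib]
  have hp1 : ∑ f : Fin 3 → Y, (if ∃ i, f i = x then
      (∑ y, if f = (fun _ => y) then P (σ y 0) y else 0) else 0) = P (σ x 0) x := by
    rw [Finset.sum_congr rfl fun f _ => ite_sum _, Finset.sum_comm,
      Finset.sum_congr rfl fun y _ => H1 (fun f => ∃ i, f i = x) (fun _ => y) (P (σ y 0) y)]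
    simp [Finset.sum_ite_eq']
  have hp2 : ∑ f : Fin 3 → Y, (if ∃ i, f i = x then
      (∑ y, ∑ z, if f = dbl σ y z then
        (P (σ y 1) y - P (σ y 0) y) * rr P σ (σ y 0) z else 0) else 0)
      = (P (σ x 1) x - P (σ x 0) x)
        + (∑ y : Y, if σ x 2 = σ y 0 then P (σ y 1) y - P (σ y 0) y else 0)
            * rr P σ (σ x 2) x := by
    rw [Finset.sum_congr rfl fun f _ => ite_sum _, Finset.sum_comm]
    have inner : ∀ y : Y, ∑ f : Fin 3 → Y, (if ∃ i, f i = x then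
        (∑ z, if f = dbl σ y z then (P (σ y 1) y - P (σ y 0) y) * rr P σ (σ y 0) z else 0)
          else 0)
        = (if y = x then P (σ x 1) x - P (σ x 0) x else 0)
          + (if σ x 2 = σ y 0 then P (σ y 1) y - P (σ y 0) y else 0) * rr P σ (σ x 2) x := by
      intro y
      rw [Finset.sum_congr rfl fun f _ => ite_sum _, Finset.sum_comm,
        Finset.sum_congr rfl fun z _ => H1 (fun f => ∃ i, f i = x) (dbl σ y z) _]
      have hcond : ∀ z : Y, (∃ i, dbl σ y z i = x) ↔ (y = x ∨ z = x) := by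
        intro z; unfold dbl; constructor
        · rintro ⟨i, hi⟩
          by_cases h : i = σ y 0
          · rw [if_pos h] at hi; exact Or.inr hi
          · rw [if_neg h] at hi; exact Or.inl hi
        · rintro (rfl | rfl)
          · exact ⟨σ y 1, by rw [if_neg (Ne.symm (signe σ y).1)]⟩
          · exact ⟨σ y 0, by rw [if_pos rfl]⟩
      rw [Finset.sum_congr rfl fun z _ => if_congr (hcond z) rfl rfl]
      by_cases hyx : y = x
      · subst hyx
        rw [Finset.sum_congr rfl fun z _ => if_pos (Or.inl rfl), if_pos rfl,
          if_neg (fun h => (signe σ y).2.1 h.symm), zero_mul, add_zero, ← Finset.mul_sum]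
        exact hwr P σ hm (σ y 0) _ (by linarith [hcb P σ hm y]) (hbc_le_D P σ hP hm hS y)
      · rw [Finset.sum_congr rfl fun z _ => if_congr (or_iff_right hyx) rfl rfl,
          Finset.sum_ite_eq' univ x
            (fun z => (P (σ y 1) y - P (σ y 0) y) * rr P σ (σ y 0) z),
          if_pos (mem_univ x), if_neg hyx, zero_add]
        by_cases hh : σ x 2 = σ y 0
        · rw [if_pos hh, ← hh]
        · rw [if_neg hh, zero_mul,
            hr_zero P σ (σ y 0) x (hd_zero P σ (σ y 0) x (fun h => hh h.symm)), mul_zero]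
    rw [Finset.sum_congr rfl fun y _ => inner y, Finset.sum_add_distrib, ← Finset.sum_mul,
      Finset.sum_ite_eq' univ x (fun _ => P (σ x 1) x - P (σ x 0) x), if_pos (mem_univ x)]
  have hp3 : ∑ f : Fin 3 → Y, (if ∃ i, f i = x then
      (1 - ∑ y, P (σ y 1) y) * ∏ i', rr P σ i' (f i') else 0)
      = (1 - ∑ y, P (σ y 1) y) * rr P σ (σ x 2) x := by
    have hconv : ∀ f : Fin 3 → Y, (if ∃ i, f i = x then
        (1 - ∑ y, P (σ y 1) y) * ∏ i', rr P σ i' (f i') else 0)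
        = (if f (σ x 2) = x then
          (1 - ∑ y, P (σ y 1) y) * ∏ i', rr P σ i' (f i') else 0) := by
      intro f
      by_cases h2 : f (σ x 2) = x
      · rw [if_pos h2, if_pos ⟨_, h2⟩]
      · rw [if_neg h2]
        by_cases hex : ∃ i, f i = x
        · rw [if_pos hex]
          obtain ⟨i, hi⟩ := hex
          have hine : i ≠ σ x 2 := fun h => h2 (h ▸ hi)
          have hz : rr P σ i (f i) = 0 := by
            rw [hi]; exact hr_zero P σ i x (hd_zero P σ i x hine)
          rw [Finset.prod_eq_zero (mem_univ i) hz, mul_zero]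
        · rw [if_neg hex]
    rw [Finset.sum_congr rfl fun f _ => hconv f]
    exact hT3 P σ hP hm hS (σ x 2) x
  rw [hp1, hp2, hp3]
  have hDi := hD_eq P σ hP (σ x 2)
  have hDrix := hDr P σ hm (σ x 2) x
  have hasg : dd P σ (σ x 2) x = P (σ x 2) x - P (σ x 1) x := by
    unfold dd asg; rw [if_neg (fun h => (signe σ x).2.1 h.symm)]
  have hkey : (∑ y : Y, if σ x 2 = σ y 0 then P (σ y 1) y - P (σ y 0) y else 0)
      * rr P σ (σ x 2) x + (1 - ∑ y, P (σ y 1) y) * rr P σ (σ x 2) x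
      = dd P σ (σ x 2) x := by
    rw [← hDrix, hDi]; ring
  linarith [hkey, hasg]

include hP hm hS in
lemma Q_nonneg (f : Fin 3 → Y) : 0 ≤ QQ P σ f := by
  unfold QQ
  have h1 : (0:ℝ) ≤ ∑ y, if f = (fun _ => y) then P (σ y 0) y else 0 := by
    refine Finset.sum_nonneg fun y _ => ?_
    split <;> [exact (hP _).1 _; exact le_refl 0]
  have h2 : (0:ℝ) ≤ ∑ y, ∑ z, if f = dbl σ y z then
      (P (σ y 1) y - P (σ y 0) y) * rr P σ (σ y 0) z else 0 := by
    refine Finset.sum_nonneg fun y _ => Finset.sum_nonneg fun z _ => ?_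
    split
    · exact mul_nonneg (by linarith [hcb P σ hm y]) (hr_nonneg P σ hm (σ y 0) z)
    · exact le_refl 0
  have h3 : (0:ℝ) ≤ (1 - ∑ y, P (σ y 1) y) * ∏ i, rr P σ i (f i) :=
    mul_nonneg (by linarith) (Finset.prod_nonneg fun i _ => hr_nonneg P σ hm i (f i))
  linarith

include hP hm hS in
lemma Q_sum : ∑ f : Fin 3 → Y, QQ P σ f = 1 := by
  unfold QQ
  rw [Finset.sum_add_distrib, Finset.sum_add_distrib]
  have h1 : ∑ f : Fin 3 → Y, ∑ y, (if f = (fun _ => y) then P (σ y 0) y else 0)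
      = ∑ y, P (σ y 0) y := by
    rw [Finset.sum_comm]
    exact Finset.sum_congr rfl fun y _ => H1' _ _
  have h2 : ∑ f : Fin 3 → Y, ∑ y, ∑ z, (if f = dbl σ y z then
      (P (σ y 1) y - P (σ y 0) y) * rr P σ (σ y 0) z else 0)
      = ∑ y, (P (σ y 1) y - P (σ y 0) y) := by
    rw [Finset.sum_comm]
    refine Finset.sum_congr rfl fun y _ => ?_
    rw [Finset.sum_comm, Finset.sum_congr rfl fun z _ => H1' _ _, ← Finset.mul_sum]
    exact hwr P σ hm (σ y 0) _ (by linarith [hcb P σ hm y]) (hbc_le_D P σ hP hm hS y)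
  have h3 : ∑ f : Fin 3 → Y, (1 - ∑ y, P (σ y 1) y) * ∏ i, rr P σ i (f i)
      = 1 - ∑ y, P (σ y 1) y := by
    rw [← Finset.mul_sum,
      show (∑ f : Fin 3 → Y, ∏ i, rr P σ i (f i)) = ∏ i, ∑ z, rr P σ i z from
        (Fintype.prod_sum _).symm]
    rcases eq_or_ne (1 - ∑ y, P (σ y 1) y) 0 with h | h
    · rw [h, zero_mul]
    · have hD : ∀ i', DD P σ i' ≠ 0 := by
        intro i' h0
        have h1 := hS_le_D P σ hP hm hS i'
        rw [h0] at h1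
        exact h (by linarith)
      rw [Finset.prod_congr rfl fun i _ => hsum_r P σ i (hD i), Finset.prod_const_one,
        mul_one]
  rw [h1, h2, h3, Finset.sum_sub_distrib]
  ring

end Construct

theorem stmt3 {Y : Type*} [Fintype Y] [DecidableEq Y]
    (P : Fin 3 → Y → ℝ) (hP : ∀ i, IsPMF (P i)) :
    (∃ Q : (Fin 3 → Y) → ℝ, IsPMF Q ∧
      (∀ i y, ∑ f : Fin 3 → Y, (if f i = y then Q f else 0) = P i y) ∧
      ∑ y, ∑ f : Fin 3 → Y, (if ∃ i, f i = y then Q f else 0) = ∑ y, ⨆ i, P i y)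
    ↔ ∑ y, max2 (fun i => P i y) ≤ 1 := by
  classical
  set σ : Y → Equiv.Perm (Fin 3) := fun y => Tuple.sort (fun i => P i y) with hσdef
  have hmono : ∀ y, Monotone ((fun i => P i y) ∘ σ y) := fun y =>
    Tuple.monotone_sort (fun i => P i y)
  have hsup : ∀ y : Y, (⨆ i, P i y) = P (σ y 2) y := fun y =>
    sup3_eq (fun i => P i y) (σ y) (hmono y)
  have hmax2 : ∀ y : Y, max2 (fun i => P i y) = P (σ y 1) y := fun y =>
    max2_eq (fun i => P i y) (σ y) (hmono y)
  rw [Finset.sum_congr rfl fun y (_ : y ∈ univ) => hmax2 y]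
  constructor
  · rintro ⟨Q, hQ, hmarg, hu⟩
    rw [Finset.sum_congr rfl fun y (_ : y ∈ univ) => hsup y] at hu
    exact forward_dir P σ Q hQ hmarg hu
  · intro hS
    refine ⟨QQ P σ, ⟨Q_nonneg P σ hP hmono hS, Q_sum P σ hP hmono hS⟩,
      Q_marg P σ hP hmono hS, ?_⟩
    rw [Finset.sum_congr rfl fun y (_ : y ∈ univ) => hsup y]
    exact Finset.sum_congr rfl fun y _ => Q_union P σ hP hmono hS y
end

section
/- Let P_1, P_2, P_3, P_4 be PMFs on a finite alphabet Y and define N_{ij} as in the n=4 coupling construction. If min{N_{12},N_{34}} + min{N_{13},N_{24}} + min{N_{14},N_{23}} ≥ τ_max2(P_1,P_2,P_3,P_4) − 1, then there exists a coupling of P_1,P_2,P_3,P_4 achieving ∑_y P(∪_{i=1}^4 {Y_i = y}) = ∑_y max{P_1(y),P_2(y),P_3(y),P_4(y)}. -/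
set_option linter.unusedSectionVars false

open Finset


namespace Stmt13

variable {Y : Type*} [Fintype Y] [DecidableEq Y]

noncomputable def sp (P : Fin 4 → Y → ℝ) (y : Y) : Equiv.Perm (Fin 4) :=
  Tuple.sort (fun i => P i y)

noncomputable def m (P : Fin 4 → Y → ℝ) (r : Fin 4) (y : Y) : ℝ := P (sp P y r) y

lemma m_mono (P : Fin 4 → Y → ℝ) {r r' : Fin 4} (h : r ≤ r') (y : Y) :
    m P r y ≤ m P r' y := Tuple.monotone_sort (fun i => P i y) h

lemma P_eq_m (P : Fin 4 → Y → ℝ) (y : Y) (i : Fin 4) :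
    P i y = m P ((sp P y).symm i) y := by
  simp [m]

noncomputable def w1 (P : Fin 4 → Y → ℝ) (y : Y) : ℝ := m P 1 y - m P 0 y
noncomputable def w2 (P : Fin 4 → Y → ℝ) (y : Y) : ℝ := m P 2 y - m P 1 y
noncomputable def w3 (P : Fin 4 → Y → ℝ) (y : Y) : ℝ := m P 3 y - m P 2 y

lemma w1_nonneg (P : Fin 4 → Y → ℝ) (y : Y) : 0 ≤ w1 P y :=
  sub_nonneg.2 (m_mono P (by decide) y)
lemma w2_nonneg (P : Fin 4 → Y → ℝ) (y : Y) : 0 ≤ w2 P y :=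
  sub_nonneg.2 (m_mono P (by decide) y)
lemma w3_nonneg (P : Fin 4 → Y → ℝ) (y : Y) : 0 ≤ w3 P y :=
  sub_nonneg.2 (m_mono P (by decide) y)

noncomputable def pY (P : Fin 4 → Y → ℝ) (y : Y) : Finset (Fin 4) :=
  {sp P y 2, sp P y 3}

noncomputable def μ (P : Fin 4 → Y → ℝ) (l : Fin 4) (y : Y) : ℝ :=
  if sp P y 3 = l then w3 P y else 0

noncomputable def s (P : Fin 4 → Y → ℝ) (l : Fin 4) : ℝ := ∑ y, μ P l y

noncomputable def pm (P : Fin 4 → Y → ℝ) (U : Finset (Fin 4)) : ℝ :=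
  ∑ y, if pY P y = U then w2 P y else 0

noncomputable def c (P : Fin 4 → Y → ℝ) (U : Finset (Fin 4)) : ℝ :=
  min (pm P U) (pm P Uᶜ)

noncomputable def CC (P : Fin 4 → Y → ℝ) : ℝ :=
  c P {0,1} + c P {0,2} + c P {0,3}

noncomputable def x (P : Fin 4 → Y → ℝ) : ℝ := 1 - (∑ y, m P 2 y) + CC P

noncomputable def T (P : Fin 4 → Y → ℝ) (l : Fin 4) : ℝ :=
  ∑ y, if sp P y 0 = l then w1 P y else 0

noncomputable def D (P : Fin 4 → Y → ℝ) (l : Fin 4) : ℝ :=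
  ∑ y, if l ∈ pY P y then 0 else
    ((pm P (pY P y) - c P (pY P y)) / pm P (pY P y)) * w2 P y

lemma μ_nonneg (P : Fin 4 → Y → ℝ) (l : Fin 4) (y : Y) : 0 ≤ μ P l y := by
  unfold μ; split <;> simp [w3_nonneg]

lemma s_nonneg (P : Fin 4 → Y → ℝ) (l : Fin 4) : 0 ≤ s P l :=
  Finset.sum_nonneg fun y _ => μ_nonneg P l y

lemma pm_nonneg (P : Fin 4 → Y → ℝ) (U : Finset (Fin 4)) : 0 ≤ pm P U := by
  refine Finset.sum_nonneg fun y _ => ?_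
  split <;> simp [w2_nonneg]

lemma c_nonneg (P : Fin 4 → Y → ℝ) (U : Finset (Fin 4)) : 0 ≤ c P U :=
  le_min (pm_nonneg P U) (pm_nonneg P Uᶜ)

lemma c_le (P : Fin 4 → Y → ℝ) (U : Finset (Fin 4)) : c P U ≤ pm P U :=
  min_le_left _ _

lemma c_compl (P : Fin 4 → Y → ℝ) (U : Finset (Fin 4)) : c P Uᶜ = c P U := by
  unfold c; rw [compl_compl, min_comm]

lemma CC_nonneg (P : Fin 4 → Y → ℝ) : 0 ≤ CC P := by
  have := c_nonneg P ({0,1} : Finset (Fin 4))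
  have := c_nonneg P ({0,2} : Finset (Fin 4))
  have := c_nonneg P ({0,3} : Finset (Fin 4))
  unfold CC; linarith

lemma sp_inj (P : Fin 4 → Y → ℝ) (y : Y) : Function.Injective (sp P y) :=
  (sp P y).injective

lemma rank_cases (P : Fin 4 → Y → ℝ) (y : Y) (i : Fin 4) :
    i = sp P y 0 ∨ i = sp P y 1 ∨ i = sp P y 2 ∨ i = sp P y 3 := by
  have h : sp P y ((sp P y).symm i) = i := (sp P y).apply_symm_apply i
  have : (sp P y).symm i = 0 ∨ (sp P y).symm i = 1 ∨ (sp P y).symm i = 2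
      ∨ (sp P y).symm i = 3 := by omega
  rcases this with h0 | h0 | h0 | h0 <;> rw [h0] at h <;> simp [h.symm]

lemma mem_pY_iff (P : Fin 4 → Y → ℝ) (y : Y) (i : Fin 4) :
    i ∈ pY P y ↔ i = sp P y 2 ∨ i = sp P y 3 := by
  simp [pY]


lemma key4 (P : Fin 4 → Y → ℝ) (y : Y) (l : Fin 4) :
    μ P l y - (if sp P y 0 = l then w1 P y else 0)
      - (if l ∈ pY P y then 0 else w2 P y) = P l y - m P 2 y := by
  have hinj := (sp P y).injective
  have e0 : (3 : Fin 4) ≠ 0 := by decide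
  have e1 : (3 : Fin 4) ≠ 1 := by decide
  have e2 : (3 : Fin 4) ≠ 2 := by decide
  have e3 : (0 : Fin 4) ≠ 1 := by decide
  have e4 : (0 : Fin 4) ≠ 2 := by decide
  have e5 : (0 : Fin 4) ≠ 3 := by decide
  have e6 : (1 : Fin 4) ≠ 2 := by decide
  have e7 : (2 : Fin 4) ≠ 3 := by decide
  have e8 : (1 : Fin 4) ≠ 3 := by decide
  rcases rank_cases P y l with h | h | h | h <;> subst h <;>
    simp [μ, mem_pY_iff, hinj.eq_iff, e0, e1, e2, e3, e4, e5, e6, e7, e8,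
      w1, w2, w3, m] <;> ring

lemma pair_cases_aux : ∀ a b : Fin 4, a ≠ b →
    ({a, b} : Finset (Fin 4)) = {0,1} ∨ ({a, b} : Finset (Fin 4)) = {0,2} ∨
    ({a, b} : Finset (Fin 4)) = {0,3} ∨ ({a, b} : Finset (Fin 4)) = {1,2} ∨
    ({a, b} : Finset (Fin 4)) = {1,3} ∨ ({a, b} : Finset (Fin 4)) = {2,3} := by
  decide

lemma pY_cases (P : Fin 4 → Y → ℝ) (y : Y) :
    pY P y = {0,1} ∨ pY P y = {0,2} ∨ pY P y = {0,3} ∨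
    pY P y = {1,2} ∨ pY P y = {1,3} ∨ pY P y = {2,3} := by
  apply pair_cases_aux
  intro h
  exact absurd ((sp P y).injective h) (by decide)

lemma sum_pY (P : Fin 4 → Y → ℝ) (g : Finset (Fin 4) → ℝ) :
    ∑ y, g (pY P y) * w2 P y
      = g {0,1} * pm P {0,1} + g {0,2} * pm P {0,2} + g {0,3} * pm P {0,3}
        + g {1,2} * pm P {1,2} + g {1,3} * pm P {1,3} + g {2,3} * pm P {2,3} := by
  unfold pm
  rw [Finset.mul_sum, Finset.mul_sum, Finset.mul_sum, Finset.mul_sum,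
    Finset.mul_sum, Finset.mul_sum, ← Finset.sum_add_distrib,
    ← Finset.sum_add_distrib, ← Finset.sum_add_distrib,
    ← Finset.sum_add_distrib, ← Finset.sum_add_distrib]
  refine Finset.sum_congr rfl fun y _ => ?_
  rcases pY_cases P y with h | h | h | h | h | h <;> rw [h] <;>
    simp (config := { decide := true })

lemma pm_zero (P : Fin 4 → Y → ℝ) {U : Finset (Fin 4)} (h : pm P U = 0)
    {y : Y} (hy : pY P y = U) : w2 P y = 0 := by
  have := (Finset.sum_eq_zero_iff_of_nonneg (fun z _ => by
    split
    · exact w2_nonneg P z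
    · exact le_refl 0)).1 h y (Finset.mem_univ y)
  rwa [if_pos hy] at this

lemma div_pm_cancel (P : Fin 4 → Y → ℝ) (U : Finset (Fin 4)) :
    c P U / pm P U * pm P U = c P U := by
  by_cases h : pm P U = 0
  · have hc : c P U = 0 := le_antisymm (by rw [← h]; exact c_le P U) (c_nonneg P U)
    simp [h, hc]
  · exact div_mul_cancel₀ _ h

lemma G_lemma (P : Fin 4 → Y → ℝ) (l : Fin 4) :
    (∑ y, if l ∈ pY P y then 0 else (c P (pY P y) / pm P (pY P y)) * w2 P y)
      = CC P := by
  have : ∀ y : Y, (if l ∈ pY P y then 0 else (c P (pY P y) / pm P (pY P y)) * w2 P y)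
      = (fun U => if l ∈ U then 0 else c P U / pm P U) (pY P y) * w2 P y := by
    intro y; by_cases h : l ∈ pY P y <;> simp [h]
  rw [Finset.sum_congr rfl fun y _ => this y,
    sum_pY P (fun U => if l ∈ U then 0 else c P U / pm P U)]
  have h12 : ({1,2} : Finset (Fin 4)) = ({0,3} : Finset (Fin 4))ᶜ := by decide
  have h13 : ({1,3} : Finset (Fin 4)) = ({0,2} : Finset (Fin 4))ᶜ := by decide
  have h23 : ({2,3} : Finset (Fin 4)) = ({0,1} : Finset (Fin 4))ᶜ := by decide
  fin_cases l <;> simp (config := { decide := true }) <;>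
    rw [div_pm_cancel, div_pm_cancel, div_pm_cancel] <;>
    simp only [h12, h13, h23, c_compl, CC] <;> try ring

lemma Dterm_nonneg (P : Fin 4 → Y → ℝ) (U : Finset (Fin 4)) (y : Y) :
    0 ≤ (pm P U - c P U) / pm P U * w2 P y :=
  mul_nonneg (div_nonneg (sub_nonneg.2 (c_le P U)) (pm_nonneg P U)) (w2_nonneg P y)

lemma T_nonneg (P : Fin 4 → Y → ℝ) (l : Fin 4) : 0 ≤ T P l := by
  refine Finset.sum_nonneg fun y _ => ?_
  split
  · exact w1_nonneg P y
  · exact le_refl 0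

lemma D_nonneg (P : Fin 4 → Y → ℝ) (l : Fin 4) : 0 ≤ D P l := by
  refine Finset.sum_nonneg fun y _ => ?_
  split
  · exact le_refl 0
  · exact Dterm_nonneg P _ y

lemma star (P : Fin 4 → Y → ℝ) (hP : ∀ i, IsPMF (P i)) (l : Fin 4) :
    s P l = T P l + D P l + x P := by
  have e1 : s P l - T P l - (∑ y, if l ∈ pY P y then 0 else w2 P y)
      = 1 - ∑ y, m P 2 y := by
    unfold s T
    rw [← Finset.sum_sub_distrib, ← Finset.sum_sub_distrib,
      Finset.sum_congr rfl (fun y _ => key4 P y l), Finset.sum_sub_distrib,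
      (hP l).2]
  have e2 : D P l = (∑ y, if l ∈ pY P y then 0 else w2 P y)
      - (∑ y, if l ∈ pY P y then 0 else (c P (pY P y) / pm P (pY P y)) * w2 P y) := by
    unfold D
    rw [← Finset.sum_sub_distrib]
    refine Finset.sum_congr rfl fun y _ => ?_
    by_cases h : l ∈ pY P y
    · simp [h]
    · simp only [if_neg h]
      by_cases hpm : pm P (pY P y) = 0
      · have hw : w2 P y = 0 := pm_zero P hpm rfl
        simp [hw]
      · field_simp
  have e3 := G_lemma P l
  unfold x
  linarith

lemma szero (P : Fin 4 → Y → ℝ) (hP : ∀ i, IsPMF (P i)) (hx : 0 ≤ x P)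
    {l : Fin 4} (h : s P l = 0) : T P l = 0 ∧ D P l = 0 ∧ x P = 0 := by
  have := star P hP l
  have hT := T_nonneg P l
  have hD := D_nonneg P l
  refine ⟨by linarith, by linarith, by linarith⟩

lemma T_zero_pt (P : Fin 4 → Y → ℝ) {l : Fin 4} (hT : T P l = 0)
    {y : Y} (h : sp P y 0 = l) : w1 P y = 0 := by
  have := (Finset.sum_eq_zero_iff_of_nonneg (fun z _ => by
    split
    · exact w1_nonneg P z
    · exact le_refl 0)).1 hT y (Finset.mem_univ y)
  rwa [if_pos h] at this

lemma D_zero_pt (P : Fin 4 → Y → ℝ) {l : Fin 4} (hD : D P l = 0)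
    {y : Y} (h : l ∉ pY P y) :
    (pm P (pY P y) - c P (pY P y)) / pm P (pY P y) * w2 P y = 0 := by
  have := (Finset.sum_eq_zero_iff_of_nonneg (fun z _ => by
    split
    · exact le_refl 0
    · exact Dterm_nonneg P _ z)).1 hD y (Finset.mem_univ y)
  rwa [if_neg h] at this

lemma μ_zero_pt (P : Fin 4 → Y → ℝ) {l : Fin 4} (h : s P l = 0) (y : Y) :
    μ P l y = 0 :=
  (Finset.sum_eq_zero_iff_of_nonneg (fun z _ => μ_nonneg P l z)).1 h y
    (Finset.mem_univ y)

lemma cancel_div {a b : ℝ} (h : b = 0 → a = 0) : a * (b / b) = a := by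
  by_cases hb : b = 0
  · simp [hb, h hb]
  · simp [div_self hb]

lemma sum_m_eq (P : Fin 4 → Y → ℝ) (y : Y) :
    m P 0 y + m P 1 y + m P 2 y + m P 3 y = P 0 y + P 1 y + P 2 y + P 3 y := by
  have h := Equiv.sum_comp (sp P y) (fun i => P i y)
  simp only [Fin.sum_univ_four] at h
  exact h

lemma fin4_le3 (r : Fin 4) : r ≤ 3 := by omega

lemma max_eq_m3 (P : Fin 4 → Y → ℝ) (y : Y) : (⨆ i, P i y) = m P 3 y := by
  apply le_antisymm
  · refine ciSup_le fun i => ?_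
    rw [P_eq_m P y i]
    exact m_mono P (fin4_le3 _) y
  · exact le_ciSup (f := fun i => P i y) (Finite.bddAbove_range _) (sp P y 3)

lemma max2_eq_m2 (P : Fin 4 → Y → ℝ) (y : Y) :
    max2 (fun i => P i y) = m P 2 y := by
  unfold max2
  haveI : Nonempty {p : Fin 4 × Fin 4 // p.1 ≠ p.2} := ⟨⟨(0, 1), by decide⟩⟩
  apply le_antisymm
  · refine ciSup_le ?_
    rintro ⟨⟨i, j⟩, hij⟩
    simp only
    have hr : (sp P y).symm i ≠ (sp P y).symm j := fun h => hij ((sp P y).symm.injective h)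
    have hcase : (sp P y).symm i ≤ 2 ∨ (sp P y).symm j ≤ 2 := by omega
    rcases hcase with h | h
    · exact le_trans (min_le_left _ _) (by rw [P_eq_m P y i]; exact m_mono P h y)
    · exact le_trans (min_le_right _ _) (by rw [P_eq_m P y j]; exact m_mono P h y)
  · have hne : ((sp P y 3, sp P y 2) : Fin 4 × Fin 4).1 ≠ (sp P y 3, sp P y 2).2 :=
      fun h => absurd ((sp P y).injective h) (by decide)
    have hval : min (P (sp P y 3) y) (P (sp P y 2) y) = m P 2 y :=
      min_eq_right (m_mono P (by decide) y)
    rw [← hval]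
    exact le_ciSup (f := fun p : {p : Fin 4 × Fin 4 // p.1 ≠ p.2} =>
      min (P p.val.1 y) (P p.val.2 y)) (Finite.bddAbove_range _)
      ⟨(sp P y 3, sp P y 2), hne⟩

lemma L1 (v a b : ℝ) :
    v - min v a - min v b + min v (min a b) = max (v - max a b) 0 := by
  simp only [min_def, max_def]
  split_ifs <;> linarith

lemma Npt (P : Fin 4 → Y → ℝ) (y : Y) (i j k l : Fin 4)
    (hij : i ≠ j) (hik : i ≠ k) (hil : i ≠ l) (hjk : j ≠ k) (hjl : j ≠ l)
    (hkl : k ≠ l) :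
    max (min (P i y) (P j y) - max (P k y) (P l y)) 0
      = (if pY P y = {i, j} then w2 P y else 0) := by
  have hi : sp P y ((sp P y).symm i) = i := (sp P y).apply_symm_apply i
  have hj : sp P y ((sp P y).symm j) = j := (sp P y).apply_symm_apply j
  have hk : sp P y ((sp P y).symm k) = k := (sp P y).apply_symm_apply k
  have hl : sp P y ((sp P y).symm l) = l := (sp P y).apply_symm_apply l
  have hinj := (sp P y).symm.injective
  have d1 : ((sp P y).symm i) ≠ ((sp P y).symm j) := fun h => hij (by rw [← hi, ← hj, h])
  have d2 : ((sp P y).symm i) ≠ ((sp P y).symm k) := fun h => hik (by rw [← hi, ← hk, h])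
  have d3 : ((sp P y).symm i) ≠ ((sp P y).symm l) := fun h => hil (by rw [← hi, ← hl, h])
  have d4 : ((sp P y).symm j) ≠ ((sp P y).symm k) := fun h => hjk (by rw [← hj, ← hk, h])
  have d5 : ((sp P y).symm j) ≠ ((sp P y).symm l) := fun h => hjl (by rw [← hj, ← hl, h])
  have d6 : ((sp P y).symm k) ≠ ((sp P y).symm l) := fun h => hkl (by rw [← hk, ← hl, h])
  have hPi : P i y = m P ((sp P y).symm i) y := P_eq_m P y i
  have hPj : P j y = m P ((sp P y).symm j) y := P_eq_m P y j
  have hPk : P k y = m P ((sp P y).symm k) y := P_eq_m P y k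
  have hPl : P l y = m P ((sp P y).symm l) y := P_eq_m P y l
  by_cases h : pY P y = {i, j}
  · rw [if_pos h]
    have hmi : i ∈ pY P y := by rw [h]; simp
    have hmj : j ∈ pY P y := by rw [h]; simp
    rw [mem_pY_iff] at hmi hmj
    have hri : ((sp P y).symm i) = 2 ∨ ((sp P y).symm i) = 3 := by
      rcases hmi with h' | h'
      · left; rw [h']; exact (sp P y).symm_apply_apply 2
      · right; rw [h']; exact (sp P y).symm_apply_apply 3
    have hrj : ((sp P y).symm j) = 2 ∨ ((sp P y).symm j) = 3 := by
      rcases hmj with h' | h'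
      · left; rw [h']; exact (sp P y).symm_apply_apply 2
      · right; rw [h']; exact (sp P y).symm_apply_apply 3
    have hrk : ((sp P y).symm k) = 0 ∨ ((sp P y).symm k) = 1 := by omega
    have hrl : ((sp P y).symm l) = 0 ∨ ((sp P y).symm l) = 1 := by omega
    have hminij : min (P i y) (P j y) = m P 2 y := by
      rcases hri with h1 | h1 <;> rcases hrj with h2 | h2 <;> try omega
      · rw [hPi, hPj, h1, h2]
        exact min_eq_left (m_mono P (by decide) y)
      · rw [hPi, hPj, h1, h2]
        exact min_eq_right (m_mono P (by decide) y)
    have hmaxkl : max (P k y) (P l y) = m P 1 y := by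
      rcases hrk with h1 | h1 <;> rcases hrl with h2 | h2 <;> try omega
      · rw [hPk, hPl, h1, h2]
        exact max_eq_right (m_mono P (by decide) y)
      · rw [hPk, hPl, h1, h2]
        exact max_eq_left (m_mono P (by decide) y)
    rw [hminij, hmaxkl]
    exact max_eq_left (sub_nonneg.2 (m_mono P (by decide) y))
  · rw [if_neg h]
    apply max_eq_right
    have hcon : ¬((((sp P y).symm i) = 2 ∨ ((sp P y).symm i) = 3) ∧ (((sp P y).symm j) = 2 ∨ ((sp P y).symm j) = 3)) := by
      rintro ⟨h1, h2⟩
      apply h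
      have e1 : ((sp P y).symm i) = 2 ∧ ((sp P y).symm j) = 3 ∨ ((sp P y).symm i) = 3 ∧ ((sp P y).symm j) = 2 := by omega
      rcases e1 with ⟨ha, hb⟩ | ⟨ha, hb⟩
      · rw [ha] at hi; rw [hb] at hj
        rw [pY, hi, hj]
      · rw [ha] at hi; rw [hb] at hj
        rw [pY, hi, hj]
        exact Finset.pair_comm j i
    have hA : ((sp P y).symm i) ≤ 1 ∨ ((sp P y).symm j) ≤ 1 := by omega
    have hB : 2 ≤ ((sp P y).symm k) ∨ 2 ≤ ((sp P y).symm l) := by omega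
    have h1 : min (P i y) (P j y) ≤ m P 1 y := by
      rcases hA with h' | h'
      · exact le_trans (min_le_left _ _) (by rw [hPi]; exact m_mono P h' y)
      · exact le_trans (min_le_right _ _) (by rw [hPj]; exact m_mono P h' y)
    have h2 : m P 1 y ≤ max (P k y) (P l y) := by
      rcases hB with h' | h'
      · exact le_trans (by rw [hPk]; exact m_mono P (by omega) y) (le_max_left _ _)
      · exact le_trans (by rw [hPl]; exact m_mono P (by omega) y) (le_max_right _ _)
    linarith

lemma N_formula (P : Fin 4 → Y → ℝ) (i j k l : Fin 4)
    (hij : i ≠ j) (hik : i ≠ k) (hil : i ≠ l) (hjk : j ≠ k) (hjl : j ≠ l)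
    (hkl : k ≠ l)
    (hmin4 : ∀ y, min (min (P 0 y) (P 1 y)) (min (P 2 y) (P 3 y))
      = min (min (P i y) (P j y)) (min (P k y) (P l y))) :
    (∑ y, (min (P i y) (P j y)
        - min (min (P i y) (P j y)) (P k y)
        - min (min (P i y) (P j y)) (P l y)
        + min (min (P 0 y) (P 1 y)) (min (P 2 y) (P 3 y))))
      = pm P {i, j} := by
  unfold pm
  refine Finset.sum_congr rfl fun y _ => ?_
  rw [hmin4 y, L1]
  exact Npt P y i j k l hij hik hil hjk hjl hkl

noncomputable def F4 (y : Y) : Fin 4 → Y := fun _ => y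
noncomputable def F31 (P : Fin 4 → Y → ℝ) (y y' : Y) : Fin 4 → Y :=
  fun i => if i = sp P y 0 then y' else y
noncomputable def F22 (P : Fin 4 → Y → ℝ) (y y' : Y) : Fin 4 → Y :=
  fun i => if i ∈ pY P y then y else y'
noncomputable def F211 (P : Fin 4 → Y → ℝ) (y y' y'' : Y) : Fin 4 → Y :=
  fun i => if i ∈ pY P y then y else if i = sp P y 0 then y' else y''

noncomputable def a31 (P : Fin 4 → Y → ℝ) (y y' : Y) : ℝ :=
  w1 P y * (μ P (sp P y 0) y' / s P (sp P y 0))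
noncomputable def a22 (P : Fin 4 → Y → ℝ) (y y' : Y) : ℝ :=
  c P (pY P y) / (pm P (pY P y) * pm P ((pY P y)ᶜ)) * w2 P y *
    (if pY P y' = (pY P y)ᶜ then w2 P y' else 0)
noncomputable def co (P : Fin 4 → Y → ℝ) (y : Y) : ℝ :=
  (pm P (pY P y) - c P (pY P y)) / pm P (pY P y) * w2 P y
noncomputable def a211 (P : Fin 4 → Y → ℝ) (y y' y'' : Y) : ℝ :=
  co P y * (μ P (sp P y 0) y' / s P (sp P y 0))
    * (μ P (sp P y 1) y'' / s P (sp P y 1))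

noncomputable def Q (P : Fin 4 → Y → ℝ) (f : Fin 4 → Y) : ℝ :=
  (∑ y, if f = F4 y then m P 0 y else 0)
  + (∑ y, ∑ y', if f = F31 P y y' then a31 P y y' else 0)
  + (1/2) * (∑ y, ∑ y', if f = F22 P y y' then a22 P y y' else 0)
  + (∑ y, ∑ y', ∑ y'', if f = F211 P y y' y'' then a211 P y y' y'' else 0)
  + x P * ∏ i, (μ P i (f i) / s P i)

lemma co_nonneg (P : Fin 4 → Y → ℝ) (y : Y) : 0 ≤ co P y := Dterm_nonneg P _ y

lemma a31_nonneg (P : Fin 4 → Y → ℝ) (y y' : Y) : 0 ≤ a31 P y y' :=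
  mul_nonneg (w1_nonneg P y) (div_nonneg (μ_nonneg P _ _) (s_nonneg P _))

lemma a22_nonneg (P : Fin 4 → Y → ℝ) (y y' : Y) : 0 ≤ a22 P y y' := by
  refine mul_nonneg (mul_nonneg (div_nonneg (c_nonneg P _)
    (mul_nonneg (pm_nonneg P _) (pm_nonneg P _))) (w2_nonneg P y)) ?_
  split
  · exact w2_nonneg P y'
  · exact le_refl 0

lemma a211_nonneg (P : Fin 4 → Y → ℝ) (y y' y'' : Y) : 0 ≤ a211 P y y' y'' :=
  mul_nonneg (mul_nonneg (co_nonneg P y)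
    (div_nonneg (μ_nonneg P _ _) (s_nonneg P _)))
    (div_nonneg (μ_nonneg P _ _) (s_nonneg P _))

lemma Q_nonneg (P : Fin 4 → Y → ℝ) (hP : ∀ i, IsPMF (P i)) (hx : 0 ≤ x P)
    (f : Fin 4 → Y) : 0 ≤ Q P f := by
  unfold Q
  have h1 : (0:ℝ) ≤ ∑ y, if f = F4 y then m P 0 y else 0 := by
    refine Finset.sum_nonneg fun y _ => ?_
    split
    · exact ((hP _).1 _)
    · exact le_refl 0
  have h2 : (0:ℝ) ≤ ∑ y, ∑ y', if f = F31 P y y' then a31 P y y' else 0 := by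
    refine Finset.sum_nonneg fun y _ => Finset.sum_nonneg fun y' _ => ?_
    split
    · exact a31_nonneg P y y'
    · exact le_refl 0
  have h3 : (0:ℝ) ≤ ∑ y, ∑ y', if f = F22 P y y' then a22 P y y' else 0 := by
    refine Finset.sum_nonneg fun y _ => Finset.sum_nonneg fun y' _ => ?_
    split
    · exact a22_nonneg P y y'
    · exact le_refl 0
  have h4 : (0:ℝ) ≤ ∑ y, ∑ y', ∑ y'', if f = F211 P y y' y'' then a211 P y y' y'' else 0 := by
    refine Finset.sum_nonneg fun y _ => Finset.sum_nonneg fun y' _ =>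
      Finset.sum_nonneg fun y'' _ => ?_
    split
    · exact a211_nonneg P y y' y''
    · exact le_refl 0
  have h5 : (0:ℝ) ≤ x P * ∏ i, (μ P i (f i) / s P i) :=
    mul_nonneg hx (Finset.prod_nonneg fun j _ =>
      div_nonneg (μ_nonneg P j (f j)) (s_nonneg P j))
  linarith

lemma sp0_notMem (P : Fin 4 → Y → ℝ) (y : Y) : sp P y 0 ∉ pY P y := by
  rw [mem_pY_iff]
  rintro (h | h) <;> exact absurd ((sp P y).injective h) (by decide)

lemma sp1_notMem (P : Fin 4 → Y → ℝ) (y : Y) : sp P y 1 ∉ pY P y := by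
  rw [mem_pY_iff]
  rintro (h | h) <;> exact absurd ((sp P y).injective h) (by decide)

lemma co_zero0 (P : Fin 4 → Y → ℝ) (hP : ∀ i, IsPMF (P i)) (hx : 0 ≤ x P)
    (y : Y) (h : s P (sp P y 0) = 0) : co P y = 0 :=
  D_zero_pt P (szero P hP hx h).2.1 (sp0_notMem P y)

lemma co_zero1 (P : Fin 4 → Y → ℝ) (hP : ∀ i, IsPMF (P i)) (hx : 0 ≤ x P)
    (y : Y) (h : s P (sp P y 1) = 0) : co P y = 0 :=
  D_zero_pt P (szero P hP hx h).2.1 (sp1_notMem P y)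

lemma w1_zero (P : Fin 4 → Y → ℝ) (hP : ∀ i, IsPMF (P i)) (hx : 0 ≤ x P)
    (y : Y) (h : s P (sp P y 0) = 0) : w1 P y = 0 :=
  T_zero_pt P (szero P hP hx h).1 rfl

lemma musum (P : Fin 4 → Y → ℝ) (l : Fin 4) :
    ∑ y', μ P l y' / s P l = s P l / s P l := by
  rw [← Finset.sum_div]
  rfl

lemma a31_row (P : Fin 4 → Y → ℝ) (hP : ∀ i, IsPMF (P i)) (hx : 0 ≤ x P)
    (y : Y) : ∑ y', a31 P y y' = w1 P y := by
  unfold a31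
  rw [← Finset.mul_sum, musum]
  exact cancel_div (w1_zero P hP hx y)

lemma c_zero_of_compl (P : Fin 4 → Y → ℝ) {U : Finset (Fin 4)}
    (h : pm P Uᶜ = 0) : c P U = 0 :=
  le_antisymm (le_trans (min_le_right _ _) (le_of_eq h)) (c_nonneg P U)

lemma c_zero_of_self (P : Fin 4 → Y → ℝ) {U : Finset (Fin 4)}
    (h : pm P U = 0) : c P U = 0 :=
  le_antisymm (le_trans (min_le_left _ _) (le_of_eq h)) (c_nonneg P U)

lemma a22_row (P : Fin 4 → Y → ℝ) (y : Y) :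
    ∑ y', a22 P y y' = c P (pY P y) / pm P (pY P y) * w2 P y := by
  unfold a22
  rw [← Finset.mul_sum]
  have hpm : (∑ y', if pY P y' = (pY P y)ᶜ then w2 P y' else 0) = pm P ((pY P y)ᶜ) := rfl
  rw [hpm]
  by_cases h' : pm P ((pY P y)ᶜ) = 0
  · rw [h', c_zero_of_compl P h']
    ring
  · by_cases h : pm P (pY P y) = 0
    · rw [h, c_zero_of_self P h]
      ring
    · field_simp

lemma a211_rowsum2 (P : Fin 4 → Y → ℝ) (hP : ∀ i, IsPMF (P i)) (hx : 0 ≤ x P)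
    (y y' : Y) : ∑ y'', a211 P y y' y'' = co P y * (μ P (sp P y 0) y' / s P (sp P y 0)) := by
  unfold a211
  rw [← Finset.mul_sum, musum]
  apply cancel_div
  intro h
  rw [co_zero1 P hP hx y h]
  ring

lemma a211_rowsum1 (P : Fin 4 → Y → ℝ) (hP : ∀ i, IsPMF (P i)) (hx : 0 ≤ x P)
    (y y'' : Y) : ∑ y', a211 P y y' y'' = co P y * (μ P (sp P y 1) y'' / s P (sp P y 1)) := by
  unfold a211
  have : ∀ y', co P y * (μ P (sp P y 0) y' / s P (sp P y 0))
      * (μ P (sp P y 1) y'' / s P (sp P y 1))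
      = (co P y * (μ P (sp P y 1) y'' / s P (sp P y 1)))
        * (μ P (sp P y 0) y' / s P (sp P y 0)) := fun y' => by ring
  rw [Finset.sum_congr rfl fun y' _ => this y', ← Finset.mul_sum, musum]
  apply cancel_div
  intro h
  rw [co_zero0 P hP hx y h]
  ring

lemma a211_row (P : Fin 4 → Y → ℝ) (hP : ∀ i, IsPMF (P i)) (hx : 0 ≤ x P)
    (y : Y) : ∑ y', ∑ y'', a211 P y y' y'' = co P y := by
  rw [Finset.sum_congr rfl fun y' _ => a211_rowsum2 P hP hx y y',
    ← Finset.mul_sum, musum]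
  apply cancel_div
  intro h
  exact co_zero0 P hP hx y h

noncomputable def D0 (P : Fin 4 → Y → ℝ) (i : Fin 4) : ℝ :=
  ∑ y, if sp P y 0 = i then co P y else 0
noncomputable def D1 (P : Fin 4 → Y → ℝ) (i : Fin 4) : ℝ :=
  ∑ y, if sp P y 1 = i then co P y else 0

lemma D_split (P : Fin 4 → Y → ℝ) (i : Fin 4) : D P i = D0 P i + D1 P i := by
  unfold D D0 D1
  rw [← Finset.sum_add_distrib]
  refine Finset.sum_congr rfl fun y _ => ?_
  have hinj := (sp P y).injective
  rcases rank_cases P y i with h | h | h | h <;> subst h <;>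
    simp [mem_pY_iff, hinj.eq_iff, sp0_notMem, sp1_notMem, co] <;>
    simp (config := { decide := true }) [hinj.eq_iff]

lemma ite_sum_push {c : Prop} [Decidable c] {α : Type*} [Fintype α] (A : α → ℝ) :
    (if c then (∑ z, A z) else 0) = ∑ z, (if c then A z else 0) := by
  split <;> simp

lemma sum_delta_cond {p : (Fin 4 → Y) → Prop} [DecidablePred p] (g : Fin 4 → Y)
    (a : ℝ) :
    ∑ f : Fin 4 → Y, (if p f then (if f = g then a else 0) else 0)
      = if p g then a else 0 := by
  have h : ∀ f : Fin 4 → Y, (if p f then (if f = g then a else 0) else 0)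
      = if f = g then (if p g then a else 0) else 0 := by
    intro f
    by_cases hf : f = g
    · subst hf; simp
    · simp [hf]
  rw [Finset.sum_congr rfl fun f _ => h f, Finset.sum_ite_eq' Finset.univ g,
    if_pos (Finset.mem_univ g)]

lemma sum_deltaY (a : Y → ℝ) (y₀ : Y) :
    ∑ y, (if y = y₀ then a y else 0) = a y₀ := by
  rw [Finset.sum_ite_eq' Finset.univ y₀ a, if_pos (Finset.mem_univ y₀)]

lemma margS1 (P : Fin 4 → Y → ℝ) (i : Fin 4) (y₀ : Y) :
    ∑ f : Fin 4 → Y, (if f i = y₀ then (∑ y, if f = F4 y then m P 0 y else 0) else 0)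
      = m P 0 y₀ := by
  rw [Finset.sum_congr rfl fun f _ => ite_sum_push _, Finset.sum_comm,
    Finset.sum_congr rfl fun y _ =>
      sum_delta_cond (p := fun f => f i = y₀) (F4 y) (m P 0 y)]
  have h : ∀ y : Y, (if F4 y i = y₀ then m P 0 y else 0)
      = if y = y₀ then m P 0 y else 0 := fun y => rfl
  rw [Finset.sum_congr rfl fun y _ => h y, sum_deltaY]

lemma margS2 (P : Fin 4 → Y → ℝ) (hP : ∀ i, IsPMF (P i)) (hx : 0 ≤ x P)
    (i : Fin 4) (y₀ : Y) :
    ∑ f : Fin 4 → Y,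
        (if f i = y₀ then (∑ y, ∑ y', if f = F31 P y y' then a31 P y y' else 0) else 0)
      = T P i * (μ P i y₀ / s P i) + (if i = sp P y₀ 0 then 0 else w1 P y₀) := by
  have step1 : ∑ f : Fin 4 → Y,
      (if f i = y₀ then (∑ y, ∑ y', if f = F31 P y y' then a31 P y y' else 0) else 0)
      = ∑ y, ∑ y', if F31 P y y' i = y₀ then a31 P y y' else 0 := by
    rw [Finset.sum_congr rfl fun f _ => ?_, Finset.sum_comm]
    · refine Finset.sum_congr rfl fun y _ => ?_
      rw [Finset.sum_comm]
      exact Finset.sum_congr rfl fun y' _ =>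
        sum_delta_cond (p := fun f => f i = y₀) (F31 P y y') (a31 P y y')
    · rw [ite_sum_push]
      exact Finset.sum_congr rfl fun y _ => ite_sum_push _
  rw [step1]
  have hsplit : ∀ y y', (if F31 P y y' i = y₀ then a31 P y y' else 0)
      = (if i = sp P y 0 then (if y' = y₀ then a31 P y y' else 0) else 0)
        + (if i = sp P y 0 then 0 else (if y = y₀ then a31 P y y' else 0)) := by
    intro y y'
    by_cases h : i = sp P y 0 <;> simp [F31, h]
  rw [Finset.sum_congr rfl fun y _ => Finset.sum_congr rfl fun y' _ => hsplit y y',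
    Finset.sum_congr rfl fun y _ => Finset.sum_add_distrib, Finset.sum_add_distrib]
  congr 1
  · -- first piece
    have h1 : ∀ y : Y, (∑ y', if i = sp P y 0 then (if y' = y₀ then a31 P y y' else 0) else 0)
        = if sp P y 0 = i then w1 P y * (μ P i y₀ / s P i) else 0 := by
      intro y
      by_cases h : i = sp P y 0
      · rw [← ite_sum_push, if_pos h, sum_deltaY, if_pos h.symm]
        unfold a31
        rw [← h]
      · rw [← ite_sum_push, if_neg h, if_neg fun hh => h hh.symm]
    rw [Finset.sum_congr rfl fun y _ => h1 y]
    unfold T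
    rw [Finset.sum_mul]
    refine Finset.sum_congr rfl fun y _ => ?_
    split <;> ring
  · -- second piece
    have h1 : ∀ y : Y, (∑ y', if i = sp P y 0 then 0 else (if y = y₀ then a31 P y y' else 0))
        = if y = y₀ then (if i = sp P y₀ 0 then 0 else ∑ y', a31 P y₀ y') else 0 := by
      intro y
      by_cases hy : y = y₀
      · subst hy
        by_cases h : i = sp P y 0 <;> simp [h]
      · by_cases h : i = sp P y 0 <;> simp [h, hy]
    rw [Finset.sum_congr rfl fun y _ => h1 y, sum_deltaY]
    by_cases h : i = sp P y₀ 0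
    · rw [if_pos h, if_pos h]
    · rw [if_neg h, if_neg h, a31_row P hP hx]

lemma margS3 (P : Fin 4 → Y → ℝ) (i : Fin 4) (y₀ : Y) :
    ∑ f : Fin 4 → Y,
        (if f i = y₀ then ((1/2) * ∑ y, ∑ y', if f = F22 P y y' then a22 P y y' else 0) else 0)
      = if i ∈ pY P y₀ then c P (pY P y₀) / pm P (pY P y₀) * w2 P y₀ else 0 := by
  have hpull : ∀ f : Fin 4 → Y,
      (if f i = y₀ then ((1/2) * ∑ y, ∑ y', if f = F22 P y y' then a22 P y y' else 0) else 0)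
      = (1/2) * (if f i = y₀ then (∑ y, ∑ y', if f = F22 P y y' then a22 P y y' else 0) else 0) := by
    intro f; split <;> ring
  rw [Finset.sum_congr rfl fun f _ => hpull f, ← Finset.mul_sum]
  have step1 : ∑ f : Fin 4 → Y,
      (if f i = y₀ then (∑ y, ∑ y', if f = F22 P y y' then a22 P y y' else 0) else 0)
      = ∑ y, ∑ y', if F22 P y y' i = y₀ then a22 P y y' else 0 := by
    rw [Finset.sum_congr rfl fun f _ => ?_, Finset.sum_comm]
    · refine Finset.sum_congr rfl fun y _ => ?_
      rw [Finset.sum_comm]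
      exact Finset.sum_congr rfl fun y' _ =>
        sum_delta_cond (p := fun f => f i = y₀) (F22 P y y') (a22 P y y')
    · rw [ite_sum_push]
      exact Finset.sum_congr rfl fun y _ => ite_sum_push _
  rw [step1]
  have hsplit : ∀ y y', (if F22 P y y' i = y₀ then a22 P y y' else 0)
      = (if i ∈ pY P y then (if y = y₀ then a22 P y y' else 0) else 0)
        + (if i ∈ pY P y then 0 else (if y' = y₀ then a22 P y y' else 0)) := by
    intro y y'
    by_cases h : i ∈ pY P y <;> simp [F22, h]
  rw [Finset.sum_congr rfl fun y _ => Finset.sum_congr rfl fun y' _ => hsplit y y',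
    Finset.sum_congr rfl fun y _ => Finset.sum_add_distrib, Finset.sum_add_distrib]
  have hEA : (∑ y, ∑ y', if i ∈ pY P y then (if y = y₀ then a22 P y y' else 0) else 0)
      = if i ∈ pY P y₀ then c P (pY P y₀) / pm P (pY P y₀) * w2 P y₀ else 0 := by
    have h1 : ∀ y : Y, (∑ y', if i ∈ pY P y then (if y = y₀ then a22 P y y' else 0) else 0)
        = if y = y₀ then (if i ∈ pY P y₀ then ∑ y', a22 P y₀ y' else 0) else 0 := by
      intro y
      by_cases hy : y = y₀
      · subst hy
        by_cases h : i ∈ pY P y <;> simp [h]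
      · by_cases h : i ∈ pY P y <;> simp [h, hy]
    rw [Finset.sum_congr rfl fun y _ => h1 y, sum_deltaY]
    by_cases h : i ∈ pY P y₀
    · rw [if_pos h, if_pos h, a22_row]
    · rw [if_neg h, if_neg h]
  have hEB : (∑ y, ∑ y', if i ∈ pY P y then 0 else (if y' = y₀ then a22 P y y' else 0))
      = if i ∈ pY P y₀ then c P (pY P y₀) / pm P (pY P y₀) * w2 P y₀ else 0 := by
    have h1 : ∀ y : Y, (∑ y', if i ∈ pY P y then 0 else (if y' = y₀ then a22 P y y' else 0))
        = if i ∈ pY P y then 0 else a22 P y y₀ := by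
      intro y
      by_cases h : i ∈ pY P y
      · simp [h]
      · simp only [if_neg h]
        exact sum_deltaY (a22 P y) y₀
    rw [Finset.sum_congr rfl fun y _ => h1 y]
    have h2 : ∀ y : Y, (if i ∈ pY P y then 0 else a22 P y y₀)
        = if pY P y = (pY P y₀)ᶜ then
            (if i ∈ pY P y₀ then
              c P (pY P y₀) / (pm P ((pY P y₀)ᶜ) * pm P (pY P y₀)) * w2 P y₀ else 0) * w2 P y
          else 0 := by
      intro y
      by_cases hV : pY P y = (pY P y₀)ᶜ
      · rw [if_pos hV]
        have h2' : pY P y₀ = (pY P y)ᶜ := by rw [hV, compl_compl]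
        unfold a22
        rw [if_pos h2', hV, compl_compl, c_compl]
        by_cases hm : i ∈ pY P y₀
        · rw [if_neg (by simp [Finset.mem_compl, hm]), if_pos hm]
          ring
        · rw [if_pos (Finset.mem_compl.2 hm), if_neg hm]
          ring
      · rw [if_neg hV]
        have hV' : ¬(pY P y₀ = (pY P y)ᶜ) := fun h => hV (by rw [h, compl_compl])
        unfold a22
        rw [if_neg hV']
        split <;> ring
    rw [Finset.sum_congr rfl fun y _ => h2 y]
    have h3 : (∑ y, if pY P y = (pY P y₀)ᶜ then
        (if i ∈ pY P y₀ then
          c P (pY P y₀) / (pm P ((pY P y₀)ᶜ) * pm P (pY P y₀)) * w2 P y₀ else 0) * w2 P y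
        else 0)
        = (if i ∈ pY P y₀ then
          c P (pY P y₀) / (pm P ((pY P y₀)ᶜ) * pm P (pY P y₀)) * w2 P y₀ else 0)
          * ∑ y, (if pY P y = (pY P y₀)ᶜ then w2 P y else 0) := by
      rw [Finset.mul_sum]
      refine Finset.sum_congr rfl fun y _ => ?_
      split <;> ring
    rw [h3, show (∑ y, if pY P y = (pY P y₀)ᶜ then w2 P y else 0)
      = pm P ((pY P y₀)ᶜ) from rfl]
    by_cases hm : i ∈ pY P y₀
    · rw [if_pos hm, if_pos hm]
      by_cases hz : pm P ((pY P y₀)ᶜ) = 0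
      · rw [hz, c_zero_of_compl P hz]
        ring
      · by_cases hz2 : pm P (pY P y₀) = 0
        · rw [hz2, c_zero_of_self P hz2]
          ring
        · field_simp
    · rw [if_neg hm, if_neg hm, zero_mul]
  rw [hEA, hEB]
  split <;> ring

lemma margS4 (P : Fin 4 → Y → ℝ) (hP : ∀ i, IsPMF (P i)) (hx : 0 ≤ x P)
    (i : Fin 4) (y₀ : Y) :
    ∑ f : Fin 4 → Y,
        (if f i = y₀ then
          (∑ y, ∑ y', ∑ y'', if f = F211 P y y' y'' then a211 P y y' y'' else 0) else 0)
      = (if i ∈ pY P y₀ then co P y₀ else 0)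
        + (D0 P i + D1 P i) * (μ P i y₀ / s P i) := by
  have step1 : ∑ f : Fin 4 → Y,
      (if f i = y₀ then
        (∑ y, ∑ y', ∑ y'', if f = F211 P y y' y'' then a211 P y y' y'' else 0) else 0)
      = ∑ y, ∑ y', ∑ y'', if F211 P y y' y'' i = y₀ then a211 P y y' y'' else 0 := by
    rw [Finset.sum_congr rfl fun f _ => ?_, Finset.sum_comm]
    · refine Finset.sum_congr rfl fun y _ => ?_
      rw [Finset.sum_comm]
      refine Finset.sum_congr rfl fun y' _ => ?_
      rw [Finset.sum_comm]
      exact Finset.sum_congr rfl fun y'' _ =>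
        sum_delta_cond (p := fun f => f i = y₀) (F211 P y y' y'') (a211 P y y' y'')
    · rw [ite_sum_push]
      refine Finset.sum_congr rfl fun y _ => ?_
      rw [ite_sum_push]
      exact Finset.sum_congr rfl fun y' _ => ite_sum_push _
  rw [step1]
  have hsplit : ∀ y y' y'', (if F211 P y y' y'' i = y₀ then a211 P y y' y'' else 0)
      = (if i ∈ pY P y then (if y = y₀ then a211 P y y' y'' else 0) else 0)
        + (if i ∈ pY P y then 0 else if i = sp P y 0 then (if y' = y₀ then a211 P y y' y'' else 0) else 0)
        + (if i ∈ pY P y then 0 else if i = sp P y 0 then 0 else (if y'' = y₀ then a211 P y y' y'' else 0)) := by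
    intro y y' y''
    by_cases h : i ∈ pY P y
    · simp only [F211, if_pos h]
      ring
    · by_cases h0 : i = sp P y 0
      · simp only [F211, if_neg h, if_pos h0]
        ring
      · simp only [F211, if_neg h, if_neg h0]
        ring
  have sum3_split : ∀ (F G H : Y → Y → Y → ℝ),
      (∑ y, ∑ y', ∑ y'', (F y y' y'' + G y y' y'' + H y y' y''))
        = (∑ y, ∑ y', ∑ y'', F y y' y'') + (∑ y, ∑ y', ∑ y'', G y y' y'')
          + (∑ y, ∑ y', ∑ y'', H y y' y'') := by
    intro F G H
    simp [Finset.sum_add_distrib]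
  rw [Finset.sum_congr rfl fun y _ => Finset.sum_congr rfl fun y' _ =>
      Finset.sum_congr rfl fun y'' _ => hsplit y y' y'', sum3_split]
  have hEA : (∑ y, ∑ y', ∑ y'', if i ∈ pY P y then (if y = y₀ then a211 P y y' y'' else 0) else 0)
      = if i ∈ pY P y₀ then co P y₀ else 0 := by
    have h1 : ∀ y : Y, (∑ y', ∑ y'', if i ∈ pY P y then (if y = y₀ then a211 P y y' y'' else 0) else 0)
        = if y = y₀ then (if i ∈ pY P y₀ then ∑ y', ∑ y'', a211 P y₀ y' y'' else 0) else 0 := by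
      intro y
      by_cases hy : y = y₀
      · subst hy
        by_cases h : i ∈ pY P y <;> simp [h]
      · by_cases h : i ∈ pY P y <;> simp [h, hy]
    rw [Finset.sum_congr rfl fun y _ => h1 y, sum_deltaY]
    by_cases h : i ∈ pY P y₀
    · rw [if_pos h, if_pos h, a211_row P hP hx]
    · rw [if_neg h, if_neg h]
  have hEB : (∑ y, ∑ y', ∑ y'', if i ∈ pY P y then 0 else
        if i = sp P y 0 then (if y' = y₀ then a211 P y y' y'' else 0) else 0)
      = D0 P i * (μ P i y₀ / s P i) := by
    have h1 : ∀ y : Y, (∑ y', ∑ y'', if i ∈ pY P y then 0 else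
        if i = sp P y 0 then (if y' = y₀ then a211 P y y' y'' else 0) else 0)
        = (if sp P y 0 = i then co P y else 0) * (μ P i y₀ / s P i) := by
      intro y
      by_cases h0 : i = sp P y 0
      · have hnm : i ∉ pY P y := by rw [h0]; exact sp0_notMem P y
        have e : ∀ y', (∑ y'', if i ∈ pY P y then 0 else
            if i = sp P y 0 then (if y' = y₀ then a211 P y y' y'' else 0) else 0)
            = if y' = y₀ then (∑ y'', a211 P y y' y'') else 0 := by
          intro y'
          rw [Finset.sum_congr rfl fun y'' _ => by rw [if_neg hnm, if_pos h0]]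
          exact (ite_sum_push _).symm
        rw [Finset.sum_congr rfl fun y' _ => e y',
          sum_deltaY (fun y' => ∑ y'', a211 P y y' y'') y₀,
          a211_rowsum2 P hP hx y y₀, ← h0, if_pos rfl]
      · have e : ∀ y', (∑ y'', if i ∈ pY P y then 0 else
            if i = sp P y 0 then (if y' = y₀ then a211 P y y' y'' else 0) else 0) = 0 := by
          intro y'
          refine Finset.sum_eq_zero fun y'' _ => ?_
          by_cases h : i ∈ pY P y
          · rw [if_pos h]
          · rw [if_neg h, if_neg h0]
        rw [Finset.sum_congr rfl fun y' _ => e y', Finset.sum_const_zero,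
          if_neg fun hh => h0 hh.symm, zero_mul]
    rw [Finset.sum_congr rfl fun y _ => h1 y, ← Finset.sum_mul]
    rfl
  have hEC : (∑ y, ∑ y', ∑ y'', if i ∈ pY P y then 0 else
        if i = sp P y 0 then 0 else (if y'' = y₀ then a211 P y y' y'' else 0))
      = D1 P i * (μ P i y₀ / s P i) := by
    have h1 : ∀ y : Y, (∑ y', ∑ y'', if i ∈ pY P y then 0 else
        if i = sp P y 0 then 0 else (if y'' = y₀ then a211 P y y' y'' else 0))
        = (if sp P y 1 = i then co P y else 0) * (μ P i y₀ / s P i) := by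
      intro y
      have hinj := (sp P y).injective
      rcases rank_cases P y i with h | h | h | h
      · have e : ∀ y', (∑ y'', if i ∈ pY P y then 0 else
            if i = sp P y 0 then 0 else (if y'' = y₀ then a211 P y y' y'' else 0)) = 0 := by
          intro y'
          refine Finset.sum_eq_zero fun y'' _ => ?_
          by_cases hm : i ∈ pY P y
          · rw [if_pos hm]
          · rw [if_neg hm, if_pos h]
        rw [Finset.sum_congr rfl fun y' _ => e y', Finset.sum_const_zero]
        have : sp P y 1 ≠ i := by
          rw [h]
          exact fun hh => absurd (hinj hh) (by decide)
        rw [if_neg this, zero_mul]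
      · have hnm : i ∉ pY P y := by rw [h]; exact sp1_notMem P y
        have hn0 : i ≠ sp P y 0 := by
          rw [h]
          exact fun hh => absurd (hinj hh) (by decide)
        have e : ∀ y', (∑ y'', if i ∈ pY P y then 0 else
            if i = sp P y 0 then 0 else (if y'' = y₀ then a211 P y y' y'' else 0))
            = a211 P y y' y₀ := by
          intro y'
          rw [Finset.sum_congr rfl fun y'' _ => by rw [if_neg hnm, if_neg hn0]]
          exact sum_deltaY (a211 P y y') y₀
        rw [Finset.sum_congr rfl fun y' _ => e y', a211_rowsum1 P hP hx y y₀,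
          ← h, if_pos rfl]
      · have hm : i ∈ pY P y := by rw [h, mem_pY_iff]; left; rfl
        have e : ∀ y', (∑ y'', if i ∈ pY P y then 0 else
            if i = sp P y 0 then 0 else (if y'' = y₀ then a211 P y y' y'' else 0)) = 0 := by
          intro y'
          refine Finset.sum_eq_zero fun y'' _ => ?_
          rw [if_pos hm]
        rw [Finset.sum_congr rfl fun y' _ => e y', Finset.sum_const_zero]
        have : sp P y 1 ≠ i := by
          rw [h]
          exact fun hh => absurd (hinj hh) (by decide)
        rw [if_neg this, zero_mul]
      · have hm : i ∈ pY P y := by rw [h, mem_pY_iff]; right; rfl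
        have e : ∀ y', (∑ y'', if i ∈ pY P y then 0 else
            if i = sp P y 0 then 0 else (if y'' = y₀ then a211 P y y' y'' else 0)) = 0 := by
          intro y'
          refine Finset.sum_eq_zero fun y'' _ => ?_
          rw [if_pos hm]
        rw [Finset.sum_congr rfl fun y' _ => e y', Finset.sum_const_zero]
        have : sp P y 1 ≠ i := by
          rw [h]
          exact fun hh => absurd (hinj hh) (by decide)
        rw [if_neg this, zero_mul]
    rw [Finset.sum_congr rfl fun y _ => h1 y, ← Finset.sum_mul]
    rfl
  rw [hEA, hEB, hEC]
  ring

lemma margS5 (P : Fin 4 → Y → ℝ) (hP : ∀ i, IsPMF (P i)) (hx : 0 ≤ x P)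
    (i : Fin 4) (y₀ : Y) :
    ∑ f : Fin 4 → Y, (if f i = y₀ then x P * ∏ j, (μ P j (f j) / s P j) else 0)
      = x P * (μ P i y₀ / s P i) := by
  have h1 : ∀ f : Fin 4 → Y,
      (if f i = y₀ then x P * ∏ j, (μ P j (f j) / s P j) else 0)
      = x P * ∏ j, (if j = i then (if f j = y₀ then μ P j (f j) / s P j else 0)
          else μ P j (f j) / s P j) := by
    intro f
    by_cases h : f i = y₀
    · rw [if_pos h]
      congr 1
      refine Finset.prod_congr rfl fun j _ => ?_
      by_cases hj : j = i
      · subst hj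
        rw [if_pos rfl, if_pos h]
      · rw [if_neg hj]
    · rw [if_neg h]
      symm
      rw [mul_eq_zero]
      right
      apply Finset.prod_eq_zero (Finset.mem_univ i)
      rw [if_pos rfl, if_neg h]
  rw [Finset.sum_congr rfl fun f _ => h1 f, ← Finset.mul_sum]
  have hswap := Finset.prod_univ_sum (t := fun _ : Fin 4 => (Finset.univ : Finset Y))
    (f := fun j z => if j = i then (if z = y₀ then μ P j z / s P j else 0)
      else μ P j z / s P j)
  rw [← Fintype.piFinset_univ, ← hswap]
  have h2 : ∀ j : Fin 4, (∑ y, if j = i then (if y = y₀ then μ P j y / s P j else 0)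
      else μ P j y / s P j)
      = if j = i then μ P i y₀ / s P i else s P j / s P j := by
    intro j
    by_cases hj : j = i
    · subst hj
      simp only [if_pos rfl]
      exact sum_deltaY (fun y => μ P j y / s P j) y₀
    · simp only [if_neg hj]
      exact musum P j
  rw [Finset.prod_congr rfl fun j _ => h2 j]
  by_cases hall : ∃ j, s P j = 0
  · obtain ⟨j0, hj0⟩ := hall
    have hx0 : x P = 0 := (szero P hP hx hj0).2.2
    rw [hx0]
    simp
  · push_neg at hall
    have h3 : ∀ j : Fin 4, (if j = i then μ P i y₀ / s P i else s P j / s P j)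
        = if j = i then μ P j y₀ / s P j else 1 := by
      intro j
      by_cases hj : j = i
      · subst hj
        simp
      · rw [if_neg hj, if_neg hj, div_self (hall j)]
    rw [Finset.prod_congr rfl fun j _ => h3 j, Finset.prod_ite_eq' Finset.univ i
      (fun j => μ P j y₀ / s P j), if_pos (Finset.mem_univ i)]

lemma marg (P : Fin 4 → Y → ℝ) (hP : ∀ i, IsPMF (P i)) (hx : 0 ≤ x P)
    (i : Fin 4) (y₀ : Y) :
    ∑ f : Fin 4 → Y, (if f i = y₀ then Q P f else 0) = P i y₀ := by
  have hsplit : ∀ f : Fin 4 → Y, (if f i = y₀ then Q P f else 0)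
      = (if f i = y₀ then (∑ y, if f = F4 y then m P 0 y else 0) else 0)
        + (if f i = y₀ then (∑ y, ∑ y', if f = F31 P y y' then a31 P y y' else 0) else 0)
        + (if f i = y₀ then ((1/2) * ∑ y, ∑ y', if f = F22 P y y' then a22 P y y' else 0) else 0)
        + (if f i = y₀ then (∑ y, ∑ y', ∑ y'', if f = F211 P y y' y'' then a211 P y y' y'' else 0) else 0)
        + (if f i = y₀ then (x P * ∏ j, (μ P j (f j) / s P j)) else 0) := by
    intro f
    unfold Q
    split <;> ring
  rw [Finset.sum_congr rfl fun f _ => hsplit f, Finset.sum_add_distrib,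
    Finset.sum_add_distrib, Finset.sum_add_distrib, Finset.sum_add_distrib,
    margS1 P i y₀, margS2 P hP hx i y₀, margS3 P i y₀, margS4 P hP hx i y₀,
    margS5 P hP hx i y₀]
  -- combine the μ/s pieces
  have hstar : T P i + (D0 P i + D1 P i) + x P = s P i := by
    have := star P hP i
    rw [D_split P i] at this
    linarith
  have hmu : T P i * (μ P i y₀ / s P i) + (D0 P i + D1 P i) * (μ P i y₀ / s P i)
      + x P * (μ P i y₀ / s P i) = μ P i y₀ := by
    have h1 : T P i * (μ P i y₀ / s P i) + (D0 P i + D1 P i) * (μ P i y₀ / s P i)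
        + x P * (μ P i y₀ / s P i) = s P i * (μ P i y₀ / s P i) := by
      rw [← hstar]; ring
    rw [h1]
    by_cases hs : s P i = 0
    · rw [hs, μ_zero_pt P hs y₀]
      ring
    · field_simp
  have hco : (if i ∈ pY P y₀ then c P (pY P y₀) / pm P (pY P y₀) * w2 P y₀ else 0)
      + (if i ∈ pY P y₀ then co P y₀ else 0)
      = (if i ∈ pY P y₀ then w2 P y₀ else 0) := by
    by_cases h : i ∈ pY P y₀
    · rw [if_pos h, if_pos h, if_pos h]
      unfold co
      by_cases hpm : pm P (pY P y₀) = 0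
      · rw [pm_zero P hpm rfl]
        ring
      · field_simp
        ring
    · rw [if_neg h, if_neg h, if_neg h]
      ring
  have hkey := key4 P y₀ i
  have e1 : (if i = sp P y₀ 0 then (0:ℝ) else w1 P y₀)
      = w1 P y₀ - (if sp P y₀ 0 = i then w1 P y₀ else 0) := by
    by_cases h : i = sp P y₀ 0
    · rw [if_pos h, if_pos h.symm]
      ring
    · rw [if_neg h, if_neg fun hh => h hh.symm]
      ring
  have e2 : (if i ∈ pY P y₀ then w2 P y₀ else 0)
      = w2 P y₀ - (if i ∈ pY P y₀ then 0 else w2 P y₀) := by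
    split_ifs <;> ring
  have hw1 : w1 P y₀ = m P 1 y₀ - m P 0 y₀ := rfl
  have hw2 : w2 P y₀ = m P 2 y₀ - m P 1 y₀ := rfl
  linarith [hmu, hco, hkey, e1, e2]

lemma G6 (P : Fin 4 → Y → ℝ) :
    ∑ y, (c P (pY P y) / pm P (pY P y)) * w2 P y = 2 * CC P := by
  rw [sum_pY P (fun U => c P U / pm P U), div_pm_cancel, div_pm_cancel,
    div_pm_cancel, div_pm_cancel, div_pm_cancel, div_pm_cancel]
  have h12 : ({1,2} : Finset (Fin 4)) = ({0,3} : Finset (Fin 4))ᶜ := by decide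
  have h13 : ({1,3} : Finset (Fin 4)) = ({0,2} : Finset (Fin 4))ᶜ := by decide
  have h23 : ({2,3} : Finset (Fin 4)) = ({0,1} : Finset (Fin 4))ᶜ := by decide
  rw [h12, h13, h23, c_compl, c_compl, c_compl]
  unfold CC
  ring

lemma co_eq (P : Fin 4 → Y → ℝ) (y : Y) :
    co P y = w2 P y - (c P (pY P y) / pm P (pY P y)) * w2 P y := by
  unfold co
  by_cases hpm : pm P (pY P y) = 0
  · rw [pm_zero P hpm rfl]
    ring
  · field_simp

lemma mass31 (P : Fin 4 → Y → ℝ) (hP : ∀ i, IsPMF (P i)) (hx : 0 ≤ x P) :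
    ∑ y, ∑ y', a31 P y y' = (∑ y, m P 1 y) - (∑ y, m P 0 y) := by
  rw [Finset.sum_congr rfl fun y _ => a31_row P hP hx y, ← Finset.sum_sub_distrib]
  rfl

lemma mass22 (P : Fin 4 → Y → ℝ) :
    ∑ y, ∑ y', a22 P y y' = 2 * CC P := by
  rw [Finset.sum_congr rfl fun y _ => a22_row P y, G6]

lemma mass211 (P : Fin 4 → Y → ℝ) (hP : ∀ i, IsPMF (P i)) (hx : 0 ≤ x P) :
    ∑ y, ∑ y', ∑ y'', a211 P y y' y''
      = ((∑ y, m P 2 y) - (∑ y, m P 1 y)) - 2 * CC P := by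
  rw [Finset.sum_congr rfl fun y _ => a211_row P hP hx y,
    Finset.sum_congr rfl fun y _ => co_eq P y, Finset.sum_sub_distrib, G6,
    ← Finset.sum_sub_distrib]
  rfl

lemma mass1111 (P : Fin 4 → Y → ℝ) (hP : ∀ i, IsPMF (P i)) (hx : 0 ≤ x P) :
    ∑ f : Fin 4 → Y, x P * ∏ j, (μ P j (f j) / s P j) = x P := by
  rw [← Finset.mul_sum]
  have hswap := Finset.prod_univ_sum (t := fun _ : Fin 4 => (Finset.univ : Finset Y))
    (f := fun j z => μ P j z / s P j)
  rw [← Fintype.piFinset_univ, ← hswap,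
    Finset.prod_congr rfl fun j (_ : j ∈ Finset.univ) => musum P j]
  by_cases hall : ∃ j, s P j = 0
  · obtain ⟨j0, hj0⟩ := hall
    have hx0 : x P = 0 := (szero P hP hx hj0).2.2
    rw [hx0]
    ring
  · push_neg at hall
    rw [Finset.prod_congr rfl fun j (_ : j ∈ Finset.univ) => div_self (hall j)]
    simp

lemma sum_mul_delta {α : Type*} [Fintype α] (b : (Fin 4 → Y) → ℝ)
    (g : α → (Fin 4 → Y)) (a : α → ℝ) :
    ∑ f : Fin 4 → Y, b f * (∑ z, if f = g z then a z else 0)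
      = ∑ z, b (g z) * a z := by
  have h : ∀ z, ∑ f : Fin 4 → Y, b f * (if f = g z then a z else 0)
      = b (g z) * a z := by
    intro z
    have hpt : ∀ f : Fin 4 → Y, b f * (if f = g z then a z else 0)
        = if f = g z then b (g z) * a z else 0 := by
      intro f
      by_cases hf : f = g z
      · subst hf; simp
      · simp [hf]
    rw [Finset.sum_congr rfl fun f _ => hpt f,
      Finset.sum_ite_eq' Finset.univ (g z), if_pos (Finset.mem_univ _)]
  rw [Finset.sum_congr rfl fun f _ => Finset.mul_sum _ _ _, Finset.sum_comm,
    Finset.sum_congr rfl fun z _ => h z]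

lemma Q_total (P : Fin 4 → Y → ℝ) (hP : ∀ i, IsPMF (P i)) (hx : 0 ≤ x P) :
    ∑ f : Fin 4 → Y, Q P f = 1 := by
  have h : ∀ f : Fin 4 → Y, Q P f = ∑ y, (if f 0 = y then Q P f else 0) := by
    intro f
    rw [Finset.sum_ite_eq Finset.univ (f 0) (fun _ => Q P f),
      if_pos (Finset.mem_univ _)]
  rw [Finset.sum_congr rfl fun f _ => h f, Finset.sum_comm,
    Finset.sum_congr rfl fun y _ => marg P hP hx 0 y]
  exact (hP 0).2

lemma card2 (y y' : Y) : ({y, y'} : Finset Y).card ≤ 2 :=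
  (Finset.card_insert_le _ _).trans (by simp)

lemma card3 (y y' y'' : Y) : ({y, y', y''} : Finset Y).card ≤ 3 :=
  (Finset.card_insert_le _ _).trans (Nat.succ_le_succ (card2 y' y''))

lemma nF4 (y : Y) : ((Finset.univ.image (F4 (Y := Y) y)).card : ℝ) ≤ 1 := by
  have h : (Finset.univ.image (F4 (Y := Y) y)).card ≤ 1 := by
    refine (Finset.card_le_card ?_).trans (le_of_eq (Finset.card_singleton y))
    intro z hz
    simp only [Finset.mem_image] at hz
    obtain ⟨i, _, hi⟩ := hz
    simp [← hi, F4]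
  exact_mod_cast h

lemma nF31 (P : Fin 4 → Y → ℝ) (y y' : Y) :
    ((Finset.univ.image (F31 P y y')).card : ℝ) ≤ 2 := by
  have h : (Finset.univ.image (F31 P y y')).card ≤ 2 := by
    refine (Finset.card_le_card ?_).trans (card2 y' y)
    intro z hz
    simp only [Finset.mem_image] at hz
    obtain ⟨i, _, hi⟩ := hz
    rw [← hi]
    unfold F31
    split <;> simp
  exact_mod_cast h

lemma nF22 (P : Fin 4 → Y → ℝ) (y y' : Y) :
    ((Finset.univ.image (F22 P y y')).card : ℝ) ≤ 2 := by
  have h : (Finset.univ.image (F22 P y y')).card ≤ 2 := by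
    refine (Finset.card_le_card ?_).trans (card2 y y')
    intro z hz
    simp only [Finset.mem_image] at hz
    obtain ⟨i, _, hi⟩ := hz
    rw [← hi]
    unfold F22
    split <;> simp
  exact_mod_cast h

lemma nF211 (P : Fin 4 → Y → ℝ) (y y' y'' : Y) :
    ((Finset.univ.image (F211 P y y' y'')).card : ℝ) ≤ 3 := by
  have h : (Finset.univ.image (F211 P y y' y'')).card ≤ 3 := by
    refine (Finset.card_le_card ?_).trans (card3 y y' y'')
    intro z hz
    simp only [Finset.mem_image] at hz
    obtain ⟨i, _, hi⟩ := hz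
    rw [← hi]
    unfold F211
    split
    · simp
    · split <;> simp
  exact_mod_cast h

lemma nF (f : Fin 4 → Y) : ((Finset.univ.image f).card : ℝ) ≤ 4 := by
  have h : (Finset.univ.image f).card ≤ 4 :=
    (Finset.card_image_le).trans (by simp)
  exact_mod_cast h

lemma nF_nonneg (f : Fin 4 → Y) : (0:ℝ) ≤ ((Finset.univ.image f).card : ℝ) := by
  positivity

lemma Ecount (P : Fin 4 → Y → ℝ) :
    ∑ y, ∑ f : Fin 4 → Y, (if ∃ i, f i = y then Q P f else 0)
      = ∑ f : Fin 4 → Y, ((Finset.univ.image f).card : ℝ) * Q P f := by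
  rw [Finset.sum_comm]
  refine Finset.sum_congr rfl fun f _ => ?_
  have himg : Finset.filter (fun y => ∃ i, f i = y) Finset.univ
      = Finset.univ.image f := by
    ext y
    simp [eq_comm]
  rw [← Finset.sum_filter, himg, Finset.sum_const, nsmul_eq_mul]

lemma lower_bound (P : Fin 4 → Y → ℝ) (hP : ∀ i, IsPMF (P i)) (hx : 0 ≤ x P) :
    ∑ y, (⨆ i, P i y) ≤ ∑ y, ∑ f : Fin 4 → Y, (if ∃ i, f i = y then Q P f else 0) := by
  refine Finset.sum_le_sum fun y _ => ?_
  refine ciSup_le fun i => ?_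
  rw [← marg P hP hx i y]
  refine Finset.sum_le_sum fun f _ => ?_
  by_cases h : f i = y
  · rw [if_pos h, if_pos ⟨i, h⟩]
  · rw [if_neg h]
    split
    · exact Q_nonneg P hP hx f
    · exact le_refl 0

lemma sum4_PMF (P : Fin 4 → Y → ℝ) (hP : ∀ i, IsPMF (P i)) :
    (∑ y, m P 0 y) + (∑ y, m P 1 y) + (∑ y, m P 2 y) + (∑ y, m P 3 y) = 4 := by
  have h : ∑ y, (m P 0 y + m P 1 y + m P 2 y + m P 3 y)
      = ∑ y, (P 0 y + P 1 y + P 2 y + P 3 y) :=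
    Finset.sum_congr rfl fun y _ => sum_m_eq P y
  simp only [Finset.sum_add_distrib] at h
  rw [(hP 0).2, (hP 1).2, (hP 2).2, (hP 3).2] at h
  linarith [h]

lemma upper_bound (P : Fin 4 → Y → ℝ) (hP : ∀ i, IsPMF (P i)) (hx : 0 ≤ x P) :
    ∑ f : Fin 4 → Y, ((Finset.univ.image f).card : ℝ) * Q P f ≤ ∑ y, m P 3 y := by
  have hQsplit : ∀ f : Fin 4 → Y, ((Finset.univ.image f).card : ℝ) * Q P f
      = ((Finset.univ.image f).card : ℝ) * (∑ y, if f = F4 y then m P 0 y else 0)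
        + ((Finset.univ.image f).card : ℝ) * (∑ z : Y × Y, if f = F31 P z.1 z.2 then a31 P z.1 z.2 else 0)
        + (1/2) * (((Finset.univ.image f).card : ℝ) * (∑ z : Y × Y, if f = F22 P z.1 z.2 then a22 P z.1 z.2 else 0))
        + ((Finset.univ.image f).card : ℝ) * (∑ z : Y × Y × Y, if f = F211 P z.1 z.2.1 z.2.2 then a211 P z.1 z.2.1 z.2.2 else 0)
        + ((Finset.univ.image f).card : ℝ) * (x P * ∏ j, (μ P j (f j) / s P j)) := by
    intro f
    unfold Q
    rw [show (∑ z : Y × Y, if f = F31 P z.1 z.2 then a31 P z.1 z.2 else 0)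
        = ∑ y, ∑ y', if f = F31 P y y' then a31 P y y' else 0 from Fintype.sum_prod_type _,
      show (∑ z : Y × Y, if f = F22 P z.1 z.2 then a22 P z.1 z.2 else 0)
        = ∑ y, ∑ y', if f = F22 P y y' then a22 P y y' else 0 from Fintype.sum_prod_type _,
      show (∑ z : Y × Y × Y, if f = F211 P z.1 z.2.1 z.2.2 then a211 P z.1 z.2.1 z.2.2 else 0)
        = ∑ y, ∑ y', ∑ y'', if f = F211 P y y' y'' then a211 P y y' y'' else 0 from
          (Fintype.sum_prod_type _).trans (Finset.sum_congr rfl fun y _ => Fintype.sum_prod_type _)]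
    ring
  rw [Finset.sum_congr rfl fun f _ => hQsplit f, Finset.sum_add_distrib,
    Finset.sum_add_distrib, Finset.sum_add_distrib, Finset.sum_add_distrib,
    sum_mul_delta _ F4 (fun y => m P 0 y),
    sum_mul_delta _ (fun z : Y × Y => F31 P z.1 z.2) (fun z => a31 P z.1 z.2),
    ← Finset.mul_sum,
    sum_mul_delta _ (fun z : Y × Y => F22 P z.1 z.2) (fun z => a22 P z.1 z.2),
    sum_mul_delta _ (fun z : Y × Y × Y => F211 P z.1 z.2.1 z.2.2)
      (fun z => a211 P z.1 z.2.1 z.2.2)]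
  have hb1 : ∑ y, ((Finset.univ.image (F4 (Y := Y) y)).card : ℝ) * m P 0 y
      ≤ ∑ y, m P 0 y := by
    refine Finset.sum_le_sum fun y _ => ?_
    have := mul_le_mul_of_nonneg_right (nF4 y) (show 0 ≤ m P 0 y from (hP _).1 _)
    linarith
  have hb2 : ∑ z : Y × Y, ((Finset.univ.image (F31 P z.1 z.2)).card : ℝ) * a31 P z.1 z.2
      ≤ 2 * ((∑ y, m P 1 y) - (∑ y, m P 0 y)) := by
    have h1 : ∑ z : Y × Y, ((Finset.univ.image (F31 P z.1 z.2)).card : ℝ) * a31 P z.1 z.2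
        ≤ ∑ z : Y × Y, 2 * a31 P z.1 z.2 := by
      refine Finset.sum_le_sum fun z _ => ?_
      exact mul_le_mul_of_nonneg_right (nF31 P z.1 z.2) (a31_nonneg P z.1 z.2)
    refine h1.trans (le_of_eq ?_)
    rw [← Finset.mul_sum, Fintype.sum_prod_type, mass31 P hP hx]
  have hb3 : (1/2) * (∑ z : Y × Y, ((Finset.univ.image (F22 P z.1 z.2)).card : ℝ) * a22 P z.1 z.2)
      ≤ 2 * CC P := by
    have h1 : ∑ z : Y × Y, ((Finset.univ.image (F22 P z.1 z.2)).card : ℝ) * a22 P z.1 z.2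
        ≤ ∑ z : Y × Y, 2 * a22 P z.1 z.2 := by
      refine Finset.sum_le_sum fun z _ => ?_
      exact mul_le_mul_of_nonneg_right (nF22 P z.1 z.2) (a22_nonneg P z.1 z.2)
    have h2 : (∑ z : Y × Y, 2 * a22 P z.1 z.2) = 2 * (2 * CC P) := by
      rw [← Finset.mul_sum, Fintype.sum_prod_type, mass22 P]
    nlinarith [h1, h2]
  have hb4 : ∑ z : Y × Y × Y, ((Finset.univ.image (F211 P z.1 z.2.1 z.2.2)).card : ℝ)
        * a211 P z.1 z.2.1 z.2.2
      ≤ 3 * (((∑ y, m P 2 y) - (∑ y, m P 1 y)) - 2 * CC P) := by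
    have h1 : ∑ z : Y × Y × Y, ((Finset.univ.image (F211 P z.1 z.2.1 z.2.2)).card : ℝ)
          * a211 P z.1 z.2.1 z.2.2
        ≤ ∑ z : Y × Y × Y, 3 * a211 P z.1 z.2.1 z.2.2 := by
      refine Finset.sum_le_sum fun z _ => ?_
      exact mul_le_mul_of_nonneg_right (nF211 P z.1 z.2.1 z.2.2) (a211_nonneg P _ _ _)
    refine h1.trans (le_of_eq ?_)
    rw [← Finset.mul_sum,
      show (∑ z : Y × Y × Y, a211 P z.1 z.2.1 z.2.2)
        = ∑ y, ∑ y', ∑ y'', a211 P y y' y'' from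
        (Fintype.sum_prod_type _).trans (Finset.sum_congr rfl fun y _ => Fintype.sum_prod_type _),
      mass211 P hP hx]
  have hb5 : ∑ f : Fin 4 → Y, ((Finset.univ.image f).card : ℝ)
        * (x P * ∏ j, (μ P j (f j) / s P j))
      ≤ 4 * x P := by
    have h1 : ∑ f : Fin 4 → Y, ((Finset.univ.image f).card : ℝ)
          * (x P * ∏ j, (μ P j (f j) / s P j))
        ≤ ∑ f : Fin 4 → Y, 4 * (x P * ∏ j, (μ P j (f j) / s P j)) := by
      refine Finset.sum_le_sum fun f _ => ?_
      refine mul_le_mul_of_nonneg_right (nF f) ?_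
      exact mul_nonneg hx (Finset.prod_nonneg fun j _ =>
        div_nonneg (μ_nonneg P j (f j)) (s_nonneg P j))
    refine h1.trans (le_of_eq ?_)
    rw [← Finset.mul_sum, mass1111 P hP hx]
  have h4 := sum4_PMF P hP
  have hxval : x P = 1 - (∑ y, m P 2 y) + CC P := rfl
  linarith [hb1, hb2, hb3, hb4, hb5]

end Stmt13

open Stmt13

theorem stmt13 {Y : Type*} [Fintype Y] [DecidableEq Y]
    (P : Fin 4 → Y → ℝ) (hP : ∀ i, IsPMF (P i))
    (N : Fin 4 → Fin 4 → Fin 4 → Fin 4 → ℝ)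
    (hN : ∀ i j k l, N i j k l = ∑ y, (min (P i y) (P j y)
        - min (min (P i y) (P j y)) (P k y)
        - min (min (P i y) (P j y)) (P l y)
        + min (min (P 0 y) (P 1 y)) (min (P 2 y) (P 3 y))))
    (hcond : (∑ y, max2 (fun i => P i y)) - 1
        ≤ min (N 0 1 2 3) (N 2 3 0 1) + min (N 0 2 1 3) (N 1 3 0 2)
          + min (N 0 3 1 2) (N 1 2 0 3)) :
    ∃ Q : (Fin 4 → Y) → ℝ, IsPMF Q ∧
      (∀ i y, ∑ f : Fin 4 → Y, (if f i = y then Q f else 0) = P i y) ∧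
      ∑ y, ∑ f : Fin 4 → Y, (if ∃ i, f i = y then Q f else 0) = ∑ y, ⨆ i, P i y := by
  have hN01 : N 0 1 2 3 = pm P {0, 1} := by
    rw [hN]
    exact N_formula P 0 1 2 3 (by decide) (by decide) (by decide) (by decide)
      (by decide) (by decide) (fun y => rfl)
  have hN23 : N 2 3 0 1 = pm P {2, 3} := by
    rw [hN]
    refine N_formula P 2 3 0 1 (by decide) (by decide) (by decide) (by decide)
      (by decide) (by decide) (fun y => ?_)
    apply le_antisymm <;> simp [le_min_iff, min_le_iff]
  have hN02 : N 0 2 1 3 = pm P {0, 2} := by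
    rw [hN]
    refine N_formula P 0 2 1 3 (by decide) (by decide) (by decide) (by decide)
      (by decide) (by decide) (fun y => ?_)
    apply le_antisymm <;> simp [le_min_iff, min_le_iff]
  have hN13 : N 1 3 0 2 = pm P {1, 3} := by
    rw [hN]
    refine N_formula P 1 3 0 2 (by decide) (by decide) (by decide) (by decide)
      (by decide) (by decide) (fun y => ?_)
    apply le_antisymm <;> simp [le_min_iff, min_le_iff]
  have hN03 : N 0 3 1 2 = pm P {0, 3} := by
    rw [hN]
    refine N_formula P 0 3 1 2 (by decide) (by decide) (by decide) (by decide)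
      (by decide) (by decide) (fun y => ?_)
    apply le_antisymm <;> simp [le_min_iff, min_le_iff]
  have hN12 : N 1 2 0 3 = pm P {1, 2} := by
    rw [hN]
    refine N_formula P 1 2 0 3 (by decide) (by decide) (by decide) (by decide)
      (by decide) (by decide) (fun y => ?_)
    apply le_antisymm <;> simp [le_min_iff, min_le_iff]
  have hmax2 : (∑ y, max2 (fun i => P i y)) = ∑ y, m P 2 y :=
    Finset.sum_congr rfl fun y _ => max2_eq_m2 P y
  have hc1 : c P {0, 1} = min (pm P {0, 1}) (pm P {2, 3}) := by
    unfold c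
    rw [show ({0, 1} : Finset (Fin 4))ᶜ = {2, 3} from by decide]
  have hc2 : c P {0, 2} = min (pm P {0, 2}) (pm P {1, 3}) := by
    unfold c
    rw [show ({0, 2} : Finset (Fin 4))ᶜ = {1, 3} from by decide]
  have hc3 : c P {0, 3} = min (pm P {0, 3}) (pm P {1, 2}) := by
    unfold c
    rw [show ({0, 3} : Finset (Fin 4))ᶜ = {1, 2} from by decide]
  rw [hN01, hN23, hN02, hN13, hN03, hN12, hmax2, ← hc1, ← hc2, ← hc3] at hcond
  have hx : 0 ≤ x P := by
    have hxval : x P = 1 - (∑ y, m P 2 y) + CC P := rfl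
    unfold CC at hxval
    linarith
  refine ⟨Q P, ⟨fun f => Q_nonneg P hP hx f, Q_total P hP hx⟩,
    fun i y => marg P hP hx i y, ?_⟩
  have hS3 : (∑ y, ⨆ i, P i y) = ∑ y, m P 3 y :=
    Finset.sum_congr rfl fun y _ => max_eq_m3 P y
  apply le_antisymm
  · rw [Ecount P, hS3]
    exact upper_bound P hP hx
  · rw [hS3, ← hS3]
    exact lower_bound P hP hx
end

section
/- For PMFs P_1,...,P_n on a finite alphabet Y and any channel W from Y to a finite alphabet U (rows of W are PMFs on U), the data processing inequality τ_max(P_1 W, ..., P_n W) ≤ τ_max(P_1,...,P_n) holds, where P_i W denotes the output PMF (P_i W)(u) = ∑_y P_i(y) W(u|y). -/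
open Finset

theorem stmt18 {ι Y U : Type*} [Fintype ι] [Fintype Y] [Fintype U] [Nonempty ι]
    (P : ι → Y → ℝ) (hP : ∀ i, IsPMF (P i))
    (W : Y → U → ℝ) (hW : ∀ y, IsPMF (W y)) :
    ∑ u, ⨆ i, (∑ y, P i y * W y u) ≤ ∑ y, ⨆ i, P i y := by
  set Q : Y → ℝ := fun y => ⨆ i, P i y with hQ
  have hPQ : ∀ i y, P i y ≤ Q y := fun i y =>
    le_ciSup (f := fun i => P i y) (Set.Finite.bddAbove (Set.finite_range _)) i
  have step : ∀ u, (⨆ i, ∑ y, P i y * W y u) ≤ ∑ y, Q y * W y u := by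
    intro u
    apply ciSup_le
    intro i
    exact Finset.sum_le_sum fun y _ => mul_le_mul_of_nonneg_right (hPQ i y) ((hW y).1 u)
  calc ∑ u, ⨆ i, (∑ y, P i y * W y u) ≤ ∑ u, ∑ y, Q y * W y u :=
        Finset.sum_le_sum fun u _ => step u
    _ = ∑ y, Q y * ∑ u, W y u := by rw [Finset.sum_comm]; simp [Finset.mul_sum]
    _ = ∑ y, Q y := by simp [(fun y => (hW y).2)]
end

section
/- For PMFs P_1,...,P_n on Y and Q_1,...,Q_n on Z, form the product PMFs P_i ⊗ Q_i on Y × Z. Then τ_max(P_1 ⊗ Q_1, ..., P_n ⊗ Q_n) ≤ τ_max(P_1,...,P_n) · τ_max(Q_1,...,Q_n), i.e., maximal leakage is sub-additive: L(X → (Y,Z)) ≤ L(X → Y) + L(X → Z) when Y and Z are conditionally independent given X. -/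
open Finset

theorem stmt19 {ι Y Z : Type*} [Fintype ι] [Fintype Y] [Fintype Z] [Nonempty ι]
    (P : ι → Y → ℝ) (hP : ∀ i, IsPMF (P i))
    (Q : ι → Z → ℝ) (hQ : ∀ i, IsPMF (Q i)) :
    ∑ p : Y × Z, ⨆ i, P i p.1 * Q i p.2
      ≤ (∑ y, ⨆ i, P i y) * (∑ z, ⨆ i, Q i z) := by
  rw [Finset.sum_mul_sum, ← Finset.sum_product']
  apply Finset.sum_le_sum
  rintro ⟨y, z⟩ -
  apply ciSup_le
  intro i
  have hPb : P i y ≤ ⨆ j, P j y := le_ciSup (f := fun j => P j y) (Finite.bddAbove_range _) i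
  have hQb : Q i z ≤ ⨆ j, Q j z := le_ciSup (f := fun j => Q j z) (Finite.bddAbove_range _) i
  exact mul_le_mul hPb hQb ((hQ i).1 z) (le_trans ((hP i).1 y) hPb)
end
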